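/- arXiv:2311.17566 — 6 statements merged into one kernel-verified Lean document; each statement's English description precedes it below -/
import Mathlib

section
/- (i) A continuous function h:ℝ→ℝ is concave if and only if h[x₀,x₁] ≥ h[x₀,x₂] whenever x₁<x₂ and x₀∉{x₁,x₂}. (ii) A continuously differentiable function h:ℝ→ℝ is d-concave (i.e., h' is concave) if and only if h[x₁,x₀,x₂] ≥ h[x₁,x₀,x₃] whenever x₁<x₂<x₃ and x₀∉{x₁,x₂,x₃}. -/
/-- `h` is concave: `h(αx₁+(1-α)x₂) ≥ αh(x₁)+(1-α)h(x₂)` for all `x₁ x₂` and `α ∈ [0,1]`. -/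
def ConcaveFn (h : ℝ → ℝ) : Prop :=
  ∀ x₁ x₂ α : ℝ, 0 ≤ α → α ≤ 1 →
    α * h x₁ + (1 - α) * h x₂ ≤ h (α * x₁ + (1 - α) * x₂)

/-- First-order divided difference `h[y₁,y₂]`. -/
noncomputable def dd1 (h : ℝ → ℝ) (y₁ y₂ : ℝ) : ℝ := (h y₂ - h y₁) / (y₂ - y₁)

/-- Second-order divided difference `h[y₁,y₂,y₃]`. -/
noncomputable def dd2 (h : ℝ → ℝ) (y₁ y₂ y₃ : ℝ) : ℝ :=
  (dd1 h y₂ y₃ - dd1 h y₁ y₂) / (y₃ - y₁)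

/-!
(i) is the classical slope characterisation of concavity.

(ii), forward: for fixed `x₁`, `y ↦ h[x₁, y] = ∫₀¹ h'(x₁ + t (y - x₁)) dt` is concave when `h'` is,
and `h[x₁, x₀, z]` is its slope between `x₀` and `z`, so (i) applies.

(ii), converse: the hypothesis says that third divided differences of `h` are nonpositive.
Hence `h[p, q, r]` decreases when the nodes are shifted to the right, i.e. every difference
quotient `y ↦ ε⁻¹ (h (y + ε) - h y)` with `ε > 0` has nonpositive second divided differences and
is concave; concavity passes to the pointwise limit `h'` as `ε → 0⁺`.
-/

open Set Filter Topology MeasureTheory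

lemma dd1_eq_slope (h : ℝ → ℝ) (a b : ℝ) : dd1 h a b = slope h a b := by
  rw [dd1, slope_def_field]

lemma dd1_comm (h : ℝ → ℝ) (a b : ℝ) : dd1 h a b = dd1 h b a := by
  rw [dd1_eq_slope, dd1_eq_slope, slope_comm]

lemma dd2_comm_left (h : ℝ → ℝ) {a b c : ℝ} (hab : a ≠ b) (hac : a ≠ c) (hbc : b ≠ c) :
    dd2 h a b c = dd2 h b a c := by
  unfold dd2 dd1
  field_simp
  ring

lemma concaveFn_iff_concaveOn (h : ℝ → ℝ) : ConcaveFn h ↔ ConcaveOn ℝ univ h := by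
  refine ⟨fun hc ↦ ⟨convex_univ, fun x _ y _ a b ha hb hab ↦ ?_⟩,
    fun hc x₁ x₂ α h0 h1 ↦ ?_⟩
  · obtain rfl : b = 1 - a := by linarith
    simpa only [smul_eq_mul] using hc x y a ha (by linarith)
  · simpa only [smul_eq_mul] using
      hc.2 (mem_univ x₁) (mem_univ x₂) h0 (by linarith : (0 : ℝ) ≤ 1 - α) (by ring)

theorem concaveFn_iff_dd1_antitone (h : ℝ → ℝ) :
    ConcaveFn h ↔ ∀ x₀ x₁ x₂ : ℝ, x₁ < x₂ → x₀ ≠ x₁ → x₀ ≠ x₂ → dd1 h x₀ x₂ ≤ dd1 h x₀ x₁ := by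
  simp only [concaveFn_iff_concaveOn, dd1_eq_slope]
  refine ⟨fun hc x₀ x₁ x₂ h12 h01 h02 ↦ ?_, fun hs ↦ ?_⟩
  · exact hc.slope_anti (mem_univ x₀) ⟨trivial, h01.symm⟩ ⟨trivial, h02.symm⟩ h12.le
  · refine concaveOn_iff_slope_anti_adjacent.2 ⟨convex_univ, fun x y z _ _ hxy hyz ↦ ?_⟩
    rw [← slope_def_field, ← slope_def_field, slope_comm h x y]
    exact hs y x z (hxy.trans hyz) hxy.ne' hyz.ne

lemma concaveFn_of_dd2_nonpos {h : ℝ → ℝ}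
    (hd : ∀ p q r : ℝ, p < q → q < r → dd2 h p q r ≤ 0) : ConcaveFn h := by
  rw [concaveFn_iff_concaveOn, concaveOn_iff_slope_anti_adjacent]
  refine ⟨convex_univ, fun x y z _ _ hxy hyz ↦ ?_⟩
  have hxz : 0 < z - x := sub_pos.2 (hxy.trans hyz)
  have := (div_le_iff₀ hxz).1 (hd x y z hxy hyz)
  rwa [zero_mul, sub_nonpos] at this

lemma ConcaveFn.of_tendsto {ι : Type*} {l : Filter ι} [l.NeBot] {f : ι → ℝ → ℝ} {g : ℝ → ℝ}
    (hf : ∀ᶠ i in l, ConcaveFn (f i)) (hfg : ∀ x, Tendsto (fun i ↦ f i x) l (𝓝 (g x))) :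
    ConcaveFn g := fun x₁ x₂ α h0 h1 ↦
  le_of_tendsto_of_tendsto (((hfg x₁).const_mul α).add ((hfg x₂).const_mul (1 - α)))
    (hfg _) (hf.mono fun _ hi ↦ hi x₁ x₂ α h0 h1)

/-- `h[a,b,c,d]`, in its symmetric (Lagrange) form. -/
noncomputable def dd3 (h : ℝ → ℝ) (a b c d : ℝ) : ℝ :=
  h a / ((a - b) * (a - c) * (a - d)) + h b / ((b - a) * (b - c) * (b - d)) +
    h c / ((c - a) * (c - b) * (c - d)) + h d / ((d - a) * (d - b) * (d - c))

section FourNodes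

variable (h : ℝ → ℝ) {a b c d : ℝ} (hab : a ≠ b) (hac : a ≠ c) (had : a ≠ d) (hbc : b ≠ c)
  (hbd : b ≠ d) (hcd : c ≠ d)
include hab hac had hbc hbd hcd

lemma dd2_sub_dd2_right : dd2 h a b d - dd2 h a b c = (d - c) * dd3 h a b c d := by
  unfold dd2 dd1 dd3
  field_simp
  ring

lemma dd2_sub_dd2_mid : dd2 h a c d - dd2 h a b d = (c - b) * dd3 h a b c d := by
  unfold dd2 dd1 dd3
  field_simp
  ring

lemma dd2_sub_dd2_left : dd2 h b c d - dd2 h a c d = (b - a) * dd3 h a b c d := by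
  unfold dd2 dd1 dd3
  field_simp
  ring

end FourNodes

lemma dd3_nonpos_of_dd2_antitone {h : ℝ → ℝ}
    (hyp : ∀ x₀ x₁ x₂ x₃ : ℝ, x₁ < x₂ → x₂ < x₃ → x₀ ≠ x₁ → x₀ ≠ x₂ → x₀ ≠ x₃ →
      dd2 h x₁ x₀ x₃ ≤ dd2 h x₁ x₀ x₂)
    {a b c d : ℝ} (hab : a < b) (hbc : b < c) (hcd : c < d) : dd3 h a b c d ≤ 0 := by
  have hac := hab.trans hbc
  have hbd := hbc.trans hcd
  have had := hab.trans hbd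
  have key := hyp a b c d hbc hcd hab.ne hac.ne had.ne
  rw [← dd2_comm_left h hab.ne had.ne hbd.ne, ← dd2_comm_left h hab.ne hac.ne hbc.ne,
    ← sub_nonpos, dd2_sub_dd2_right h hab.ne hac.ne had.ne hbc.ne hbd.ne hcd.ne] at key
  exact nonpos_of_mul_nonpos_right key (sub_pos.2 hcd)

section NonposThirdDividedDifference

variable {h : ℝ → ℝ} (hP : ∀ a b c d : ℝ, a < b → b < c → c < d → dd3 h a b c d ≤ 0)
include hP

lemma dd2_antitone_of_dd3_nonpos {a b c d : ℝ} (hab : a < b) (hbc : b < c) (hcd : c < d) :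
    dd2 h b c d ≤ dd2 h a c d ∧ dd2 h a c d ≤ dd2 h a b d ∧ dd2 h a b d ≤ dd2 h a b c := by
  have hac := hab.trans hbc
  have hbd := hbc.trans hcd
  have had := hab.trans hbd
  have hneg := hP a b c d hab hbc hcd
  have left := dd2_sub_dd2_left h hab.ne hac.ne had.ne hbc.ne hbd.ne hcd.ne
  have mid := dd2_sub_dd2_mid h hab.ne hac.ne had.ne hbc.ne hbd.ne hcd.ne
  have right := dd2_sub_dd2_right h hab.ne hac.ne had.ne hbc.ne hbd.ne hcd.ne
  refine ⟨?_, ?_, ?_⟩ <;> nlinarith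

lemma dd2_add_le_of_dd3_nonpos {p q r ε : ℝ} (hpq : p < q) (hqr : q < r) (hε : 0 < ε) :
    dd2 h (p + ε) (q + ε) (r + ε) ≤ dd2 h p q r :=
  calc dd2 h (p + ε) (q + ε) (r + ε)
      ≤ dd2 h p (q + ε) (r + ε) :=
        (dd2_antitone_of_dd3_nonpos hP (by linarith) (by linarith) (by linarith)).1
    _ ≤ dd2 h p q (r + ε) :=
        (dd2_antitone_of_dd3_nonpos hP hpq (by linarith) (by linarith)).2.1
    _ ≤ dd2 h p q r := (dd2_antitone_of_dd3_nonpos hP hpq hqr (by linarith)).2.2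

end NonposThirdDividedDifference

lemma dd2_difference_quotient (h : ℝ → ℝ) (ε p q r : ℝ) :
    dd2 (fun y ↦ ε⁻¹ * (h (y + ε) - h y)) p q r =
      ε⁻¹ * (dd2 h (p + ε) (q + ε) (r + ε) - dd2 h p q r) := by
  unfold dd2 dd1
  ring

theorem concaveFn_deriv_of_dd3_nonpos {h h' : ℝ → ℝ} (hh : ∀ x, HasDerivAt h (h' x) x)
    (hP : ∀ a b c d : ℝ, a < b → b < c → c < d → dd3 h a b c d ≤ 0) : ConcaveFn h' := by
  refine ConcaveFn.of_tendsto (l := 𝓝[>] 0) (f := fun ε y ↦ ε⁻¹ * (h (y + ε) - h y)) ?_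
    fun x ↦ (hh x).tendsto_slope_zero_right
  filter_upwards [self_mem_nhdsWithin] with ε (hε : 0 < ε)
  refine concaveFn_of_dd2_nonpos fun p q r hpq hqr ↦ ?_
  rw [dd2_difference_quotient]
  exact mul_nonpos_of_nonneg_of_nonpos (inv_nonneg.2 hε.le)
    (sub_nonpos.2 (dd2_add_le_of_dd3_nonpos hP hpq hqr hε))

section DerivConcave

variable {h h' : ℝ → ℝ}

lemma dd1_eq_integral (hh : ∀ x, HasDerivAt h (h' x) x) (hcont : Continuous h') {a y : ℝ}
    (hy : y ≠ a) : dd1 h a y = ∫ t in (0 : ℝ)..1, h' ((y - a) * t + a) := by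
  rw [intervalIntegral.integral_comp_mul_add h' (sub_ne_zero.2 hy), mul_zero, zero_add, mul_one,
    sub_add_cancel, intervalIntegral.integral_eq_sub_of_hasDerivAt (fun x _ ↦ hh x)
      (hcont.intervalIntegrable a y), dd1, smul_eq_mul, inv_mul_eq_div]

lemma ConcaveFn.integral_comp_mul_add (hcont : Continuous h') (hc : ConcaveFn h') (a : ℝ) :
    ConcaveFn fun y ↦ ∫ t in (0 : ℝ)..1, h' ((y - a) * t + a) := by
  intro x₁ x₂ α h0 h1
  have hint : ∀ z : ℝ, IntervalIntegrable (fun t ↦ h' ((z - a) * t + a)) volume 0 1 :=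
    fun z ↦ (hcont.comp (by fun_prop)).intervalIntegrable 0 1
  rw [← intervalIntegral.integral_const_mul, ← intervalIntegral.integral_const_mul,
    ← intervalIntegral.integral_add ((hint x₁).const_mul α) ((hint x₂).const_mul (1 - α))]
  refine intervalIntegral.integral_mono_on zero_le_one
    (((hint x₁).const_mul α).add ((hint x₂).const_mul (1 - α))) (hint _) fun t _ ↦ ?_
  convert hc ((x₁ - a) * t + a) ((x₂ - a) * t + a) α h0 h1 using 2
  ring

theorem dd2_antitone_of_concaveFn_deriv (hh : ∀ x, HasDerivAt h (h' x) x)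
    (hcont : Continuous h') (hc : ConcaveFn h') (x₀ x₁ x₂ x₃ : ℝ) (h12 : x₁ < x₂) (h23 : x₂ < x₃)
    (h01 : x₀ ≠ x₁) (h02 : x₀ ≠ x₂) (h03 : x₀ ≠ x₃) : dd2 h x₁ x₀ x₃ ≤ dd2 h x₁ x₀ x₂ := by
  set g := fun y ↦ ∫ t in (0 : ℝ)..1, h' ((y - x₁) * t + x₁)
  have hg : ∀ z, x₁ < z → x₀ ≠ z → dd2 h x₁ x₀ z = dd1 g x₀ z := fun z h1z h0z ↦ by
    rw [← dd2_comm_left h h01 h0z h1z.ne, dd2, dd1_comm h x₀ x₁,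
      dd1_eq_integral hh hcont h1z.ne', dd1_eq_integral hh hcont h01]
    rfl
  rw [hg x₂ h12 h02, hg x₃ (h12.trans h23) h03]
  exact (concaveFn_iff_dd1_antitone g).1 (hc.integral_comp_mul_add hcont x₁) x₀ x₂ x₃ h23 h02 h03

end DerivConcave

/-- (i) A continuous `h : ℝ → ℝ` is concave iff `h[x₀,x₁] ≥ h[x₀,x₂]` whenever `x₁ < x₂`
and `x₀ ∉ {x₁, x₂}`.  (ii) A continuously differentiable `h : ℝ → ℝ` is d-concave
(i.e. `h'` is concave) iff `h[x₁,x₀,x₂] ≥ h[x₁,x₀,x₃]` whenever `x₁ < x₂ < x₃` and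
`x₀ ∉ {x₁, x₂, x₃}`. -/
theorem stmt0 :
    (∀ h : ℝ → ℝ, Continuous h →
      (ConcaveFn h ↔ ∀ x₀ x₁ x₂ : ℝ, x₁ < x₂ → x₀ ≠ x₁ → x₀ ≠ x₂ →
        dd1 h x₀ x₂ ≤ dd1 h x₀ x₁)) ∧
    (∀ h h' : ℝ → ℝ, (∀ x, HasDerivAt h (h' x) x) → Continuous h' →
      (ConcaveFn h' ↔ ∀ x₀ x₁ x₂ x₃ : ℝ, x₁ < x₂ → x₂ < x₃ →
        x₀ ≠ x₁ → x₀ ≠ x₂ → x₀ ≠ x₃ →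
        dd2 h x₁ x₀ x₃ ≤ dd2 h x₁ x₀ x₂)) :=
  ⟨fun h _ ↦ concaveFn_iff_dd1_antitone h, fun _ _ hh hcont ↦
    ⟨dd2_antitone_of_concaveFn_deriv hh hcont, fun hyp ↦
      concaveFn_deriv_of_dd3_nonpos hh fun _ _ _ _ ↦ dd3_nonpos_of_dd2_antitone hyp⟩⟩
end

section
/- Let h:ℝ→ℝ be twice continuously differentiable and d-concave (i.e., h' is concave), and let x₁<x₂<x₃. Define b₁ := (h[x₁,x₂]−h'(x₁))/(x₂−x₁) − (h[x₁,x₃]−h'(x₁))/(x₃−x₁), b₂ := (h'(x₂)−h[x₁,x₂])/(x₂−x₁) − (h[x₂,x₃]−h[x₁,x₂])/(x₃−x₁), and b₃ := (h[x₂,x₃]−h[x₁,x₃])/(x₂−x₁) − (h'(x₃)−h[x₁,x₃])/(x₃−x₁). Then bⱼ≥0 for every j∈{1,2,3}, and for each j∈{1,2,3} one has bⱼ>0 if and only if h''(x₁)>h''(x₃). -/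
/-!
Put `w = x₁ + t (x₂ - x₁)` and `v = x₁ + t (x₃ - x₁)` for `t ∈ [0, 1]`. By the fundamental theorem
of calculus each `bⱼ` is `∫₀¹` of a nonnegative combination of the tangent-line gaps
`h''(a) (b - a) - (h'(b) - h'(a))` and `h'(b) - h'(a) - h''(b) (b - a)` of `h'` over `[x₁, w]` and
`[w, v]`. Since `h''` is antitone and continuous, such a gap is `≥ 0`, with equality iff
`h''(a) = h''(b)`. So `bⱼ > 0` iff `h''` drops on one of these intervals. For `b₁` this happens
already on `[x₁, x₃]` (at `t = 1`). For `b₂`, `b₃` the intervals `[w, v]` scale towards `x₁` by the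
factor `(x₂ - x₁) / (x₃ - x₁)`, so if `h''(v) = h''(w)` for every `t`, iterating and using
continuity at `x₁` gives `h''(x₃) = h''(x₁)`.
-/

open Set Filter Topology intervalIntegral

theorem ConcaveFn.concaveOn {f : ℝ → ℝ} (hf : ConcaveFn f) : ConcaveOn ℝ univ f := by
  refine ⟨convex_univ, fun x _ y _ a b ha hb hab => ?_⟩
  obtain rfl : b = 1 - a := by linarith
  simpa only [smul_eq_mul] using hf x y a ha (by linarith)

theorem ConcaveFn.antitone_of_hasDerivAt {f f' : ℝ → ℝ} (hf : ConcaveFn f)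
    (hd : ∀ x, HasDerivAt f (f' x) x) : Antitone f' := by
  have h := hf.concaveOn.antitoneOn_deriv fun x _ => (hd x).differentiableAt
  rwa [antitoneOn_univ, funext fun x => (hd x).deriv] at h

theorem apply_one_eq_apply_zero_of_comp_mul {φ : ℝ → ℝ} {r : ℝ} (hφ : ContinuousAt φ 0)
    (hr₀ : 0 < r) (hr₁ : r < 1) (h : ∀ s ∈ Ioc (0 : ℝ) 1, φ (r * s) = φ s) : φ 1 = φ 0 := by
  have hpow : ∀ n : ℕ, φ (r ^ n) = φ 1 := by
    intro n
    induction n with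
    | zero => simp
    | succ n ih =>
      rw [pow_succ', h _ ⟨pow_pos hr₀ n, pow_le_one₀ hr₀.le hr₁.le⟩, ih]
  have hlim : Tendsto (fun n : ℕ => φ (r ^ n)) atTop (𝓝 (φ 0)) :=
    hφ.tendsto.comp (tendsto_pow_atTop_nhds_zero_of_lt_one hr₀.le hr₁)
  simp only [hpow] at hlim
  exact tendsto_nhds_unique tendsto_const_nhds hlim

theorem Antitone.lt_iff_exists_scaled_lt {f : ℝ → ℝ} (hf : Antitone f) (hc : Continuous f)
    {a b c : ℝ} (hab : a < b) (hbc : b < c) :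
    f c < f a ↔ ∃ t ∈ Icc (0 : ℝ) 1, f (a + t * (c - a)) < f (a + t * (b - a)) := by
  constructor
  · contrapose!
    intro hle
    have hca : 0 < c - a := by linarith
    have key := apply_one_eq_apply_zero_of_comp_mul (φ := fun s => f (a + s * (c - a)))
      (r := (b - a) / (c - a)) (by fun_prop) (div_pos (by linarith) hca)
      ((div_lt_one hca).2 (by linarith)) fun s hs => by
        have hs' : (b - a) / (c - a) * s * (c - a) = s * (b - a) := by field_simp
        simp only [hs']
        exact le_antisymm (hle s (Ioc_subset_Icc_self hs)) (hf (by nlinarith [hs.1]))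
    simp only [zero_mul, add_zero, one_mul, add_sub_cancel] at key
    exact key.ge
  · rintro ⟨t, ⟨ht₀, ht₁⟩, hlt⟩
    calc f c ≤ f (a + t * (c - a)) := hf (by nlinarith)
      _ < f (a + t * (b - a)) := hlt
      _ ≤ f a := hf (by nlinarith)

theorem integral_pos_iff_exists_pos_of_nonneg {ψ : ℝ → ℝ} {a b : ℝ} (hab : a < b)
    (hψ : ContinuousOn ψ (Icc a b)) (h0 : ∀ x ∈ Icc a b, 0 ≤ ψ x) :
    0 < ∫ x in a..b, ψ x ↔ ∃ x ∈ Icc a b, 0 < ψ x := by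
  constructor
  · intro hpos
    by_contra! hle
    have : ∫ x in a..b, ψ x ≤ ∫ _ in a..b, (0 : ℝ) :=
      integral_mono_on hab.le (hψ.intervalIntegrable_of_Icc hab.le) intervalIntegrable_const hle
    simp only [integral_zero] at this
    linarith
  · rintro ⟨x, hx, hψx⟩
    simpa using integral_lt_integral_of_continuousOn_of_le_of_exists_lt hab
      continuousOn_const hψ (fun y hy => h0 y (Ioc_subset_Icc_self hy)) ⟨x, hx, hψx⟩

section TangentGap

variable {g g' : ℝ → ℝ} {a b : ℝ}

def leftTangentGap (g g' : ℝ → ℝ) (a b : ℝ) : ℝ := g' a * (b - a) - (g b - g a)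

def rightTangentGap (g g' : ℝ → ℝ) (a b : ℝ) : ℝ := g b - g a - g' b * (b - a)

theorem leftTangentGap_eq_integral (hab : a ≤ b) (hg : ∀ x ∈ Icc a b, HasDerivAt g (g' x) x)
    (hc : ContinuousOn g' (Icc a b)) :
    leftTangentGap g g' a b = ∫ x in a..b, (g' a - g' x) := by
  have hi := hc.intervalIntegrable_of_Icc (μ := MeasureTheory.volume) hab
  rw [integral_sub intervalIntegrable_const hi, integral_const,
    integral_eq_sub_of_hasDerivAt (by rwa [uIcc_of_le hab]) hi, smul_eq_mul, mul_comm,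
    leftTangentGap]

theorem rightTangentGap_eq_integral (hab : a ≤ b) (hg : ∀ x ∈ Icc a b, HasDerivAt g (g' x) x)
    (hc : ContinuousOn g' (Icc a b)) :
    rightTangentGap g g' a b = ∫ x in a..b, (g' x - g' b) := by
  have hi := hc.intervalIntegrable_of_Icc (μ := MeasureTheory.volume) hab
  rw [integral_sub hi intervalIntegrable_const, integral_const,
    integral_eq_sub_of_hasDerivAt (by rwa [uIcc_of_le hab]) hi, smul_eq_mul, mul_comm,
    rightTangentGap]

theorem leftTangentGap_nonneg (hab : a ≤ b) (hg : ∀ x ∈ Icc a b, HasDerivAt g (g' x) x)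
    (hc : ContinuousOn g' (Icc a b)) (hanti : AntitoneOn g' (Icc a b)) :
    0 ≤ leftTangentGap g g' a b := by
  rw [leftTangentGap_eq_integral hab hg hc]
  exact integral_nonneg hab fun x hx => sub_nonneg.2 (hanti ⟨le_rfl, hab⟩ hx hx.1)

theorem rightTangentGap_nonneg (hab : a ≤ b) (hg : ∀ x ∈ Icc a b, HasDerivAt g (g' x) x)
    (hc : ContinuousOn g' (Icc a b)) (hanti : AntitoneOn g' (Icc a b)) :
    0 ≤ rightTangentGap g g' a b := by
  rw [rightTangentGap_eq_integral hab hg hc]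
  exact integral_nonneg hab fun x hx => sub_nonneg.2 (hanti hx ⟨hab, le_rfl⟩ hx.2)

theorem leftTangentGap_pos_iff (hab : a ≤ b) (hg : ∀ x ∈ Icc a b, HasDerivAt g (g' x) x)
    (hc : ContinuousOn g' (Icc a b)) (hanti : AntitoneOn g' (Icc a b)) :
    0 < leftTangentGap g g' a b ↔ g' b < g' a := by
  obtain rfl | hab := hab.eq_or_lt
  · simp only [leftTangentGap, sub_self, mul_zero, lt_self_iff_false]
  rw [leftTangentGap_eq_integral hab.le hg hc, integral_pos_iff_exists_pos_of_nonneg hab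
    (by fun_prop) fun x hx => sub_nonneg.2 (hanti ⟨le_rfl, hab.le⟩ hx hx.1)]
  refine ⟨fun ⟨x, hx, hlt⟩ => ?_, fun hlt => ⟨b, ⟨hab.le, le_rfl⟩, sub_pos.2 hlt⟩⟩
  exact (hanti hx ⟨hab.le, le_rfl⟩ hx.2).trans_lt (sub_pos.1 hlt)

theorem rightTangentGap_pos_iff (hab : a ≤ b) (hg : ∀ x ∈ Icc a b, HasDerivAt g (g' x) x)
    (hc : ContinuousOn g' (Icc a b)) (hanti : AntitoneOn g' (Icc a b)) :
    0 < rightTangentGap g g' a b ↔ g' b < g' a := by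
  obtain rfl | hab := hab.eq_or_lt
  · simp only [rightTangentGap, sub_self, mul_zero, lt_self_iff_false]
  rw [rightTangentGap_eq_integral hab.le hg hc, integral_pos_iff_exists_pos_of_nonneg hab
    (by fun_prop) fun x hx => sub_nonneg.2 (hanti hx ⟨hab.le, le_rfl⟩ hx.2)]
  refine ⟨fun ⟨x, hx, hlt⟩ => ?_, fun hlt => ⟨a, ⟨le_rfl, hab.le⟩, sub_pos.2 hlt⟩⟩
  exact (sub_pos.1 hlt).trans_le (hanti ⟨le_rfl, hab.le⟩ hx hx.1)

theorem mul_rightTangentGap_add_mul_leftTangentGap_pos_iff {c p q : ℝ} (hab : a ≤ b)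
    (hbc : b ≤ c) (hg : ∀ x ∈ Icc a c, HasDerivAt g (g' x) x) (hc : ContinuousOn g' (Icc a c))
    (hanti : AntitoneOn g' (Icc a c)) (hp : 0 < p) (hq : 0 < q) :
    0 < p * rightTangentGap g g' a b + q * leftTangentGap g g' b c ↔ g' c < g' a := by
  have hI : Icc a b ⊆ Icc a c := Icc_subset_Icc_right hbc
  have hJ : Icc b c ⊆ Icc a c := Icc_subset_Icc_left hab
  have hR := rightTangentGap_nonneg hab (fun x hx => hg x (hI hx)) (hc.mono hI) (hanti.mono hI)
  have hL := leftTangentGap_nonneg hbc (fun x hx => hg x (hJ hx)) (hc.mono hJ) (hanti.mono hJ)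
  have hRpos := rightTangentGap_pos_iff hab (fun x hx => hg x (hI hx)) (hc.mono hI)
    (hanti.mono hI)
  have hLpos := leftTangentGap_pos_iff hbc (fun x hx => hg x (hJ hx)) (hc.mono hJ)
    (hanti.mono hJ)
  have hb : b ∈ Icc a c := ⟨hab, hbc⟩
  have hba := hanti ⟨le_rfl, hab.trans hbc⟩ hb hab
  have hcb := hanti hb ⟨hab.trans hbc, le_rfl⟩ hbc
  constructor
  · intro hpos
    by_contra! hle
    have hR0 : rightTangentGap g g' a b ≤ 0 := not_lt.1 fun h => by linarith [hRpos.1 h]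
    have hL0 : leftTangentGap g g' b c ≤ 0 := not_lt.1 fun h => by linarith [hLpos.1 h]
    nlinarith
  · intro hlt
    rcases lt_or_ge (g' b) (g' a) with hlt' | hge
    · nlinarith [hRpos.2 hlt']
    · nlinarith [hLpos.2 (by linarith)]

end TangentGap

theorem hasDerivAt_comp_add_mul {F F' : ℝ → ℝ} (hF : ∀ x, HasDerivAt F (F' x) x) (a c t : ℝ) :
    HasDerivAt (fun s => F (a + s * c)) (F' (a + t * c) * c) t :=
  (hF (a + t * c)).comp t ((hasDerivAt_mul_const c).const_add a)

namespace DConcave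

noncomputable def b₁ (h h' : ℝ → ℝ) (x₁ x₂ x₃ : ℝ) : ℝ :=
  (dd1 h x₁ x₂ - h' x₁) / (x₂ - x₁) - (dd1 h x₁ x₃ - h' x₁) / (x₃ - x₁)

noncomputable def b₂ (h h' : ℝ → ℝ) (x₁ x₂ x₃ : ℝ) : ℝ :=
  (h' x₂ - dd1 h x₁ x₂) / (x₂ - x₁) - (dd1 h x₂ x₃ - dd1 h x₁ x₂) / (x₃ - x₁)

noncomputable def b₃ (h h' : ℝ → ℝ) (x₁ x₂ x₃ : ℝ) : ℝ :=
  (dd1 h x₂ x₃ - dd1 h x₁ x₃) / (x₂ - x₁) - (h' x₃ - dd1 h x₁ x₃) / (x₃ - x₁)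

variable {h h' h'' : ℝ → ℝ} {x₁ x₂ x₃ : ℝ}

theorem b₁_eq_integral (hh : ∀ x, HasDerivAt h (h' x) x) (hh' : ∀ x, HasDerivAt h' (h'' x) x)
    (hc'' : Continuous h'') (h12 : x₁ < x₂) (h23 : x₂ < x₃) :
    b₁ h h' x₁ x₂ x₃ = ∫ t in (0 : ℝ)..1,
      ((x₃ - x₂) * rightTangentGap h' h'' x₁ (x₁ + t * (x₂ - x₁)) +
        (x₂ - x₁) * leftTangentGap h' h'' (x₁ + t * (x₂ - x₁)) (x₁ + t * (x₃ - x₁))) /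
      ((x₂ - x₁) * (x₃ - x₁)) := by
  have hc' : Continuous h' := continuous_iff_continuousAt.2 fun x => (hh' x).continuousAt
  have hd : x₂ - x₁ ≠ 0 := sub_ne_zero.2 h12.ne'
  have hD : x₃ - x₁ ≠ 0 := sub_ne_zero.2 (h12.trans h23).ne'
  have hderiv : ∀ t, HasDerivAt
      (fun t => h (x₁ + t * (x₂ - x₁)) / (x₂ - x₁) ^ 2 - h (x₁ + t * (x₃ - x₁)) / (x₃ - x₁) ^ 2
        - t * h' x₁ * (1 / (x₂ - x₁) - 1 / (x₃ - x₁)))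
      (((x₃ - x₂) * rightTangentGap h' h'' x₁ (x₁ + t * (x₂ - x₁)) +
        (x₂ - x₁) * leftTangentGap h' h'' (x₁ + t * (x₂ - x₁)) (x₁ + t * (x₃ - x₁))) /
      ((x₂ - x₁) * (x₃ - x₁))) t := by
    intro t
    refine ((((hasDerivAt_comp_add_mul hh x₁ (x₂ - x₁) t).div_const ((x₂ - x₁) ^ 2)).sub
      ((hasDerivAt_comp_add_mul hh x₁ (x₃ - x₁) t).div_const ((x₃ - x₁) ^ 2))).sub
      (((hasDerivAt_id t).mul_const (h' x₁)).mul_const (1 / (x₂ - x₁) - 1 / (x₃ - x₁))))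
      |>.congr_deriv ?_
    simp only [leftTangentGap, rightTangentGap]
    field_simp
    ring
  rw [integral_eq_sub_of_hasDerivAt (fun t _ => hderiv t)
    (Continuous.intervalIntegrable (by simp only [leftTangentGap, rightTangentGap]; fun_prop) _ _)]
  simp only [b₁, dd1, one_mul, zero_mul, add_zero, add_sub_cancel]
  field_simp
  ring

theorem b₂_eq_integral (hh : ∀ x, HasDerivAt h (h' x) x) (hh' : ∀ x, HasDerivAt h' (h'' x) x)
    (hc'' : Continuous h'') (h12 : x₁ < x₂) (h23 : x₂ < x₃) :
    b₂ h h' x₁ x₂ x₃ = ∫ t in (0 : ℝ)..1,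
      leftTangentGap h' h'' (x₁ + t * (x₂ - x₁)) (x₁ + t * (x₃ - x₁)) / (x₃ - x₂) := by
  have hc' : Continuous h' := continuous_iff_continuousAt.2 fun x => (hh' x).continuousAt
  have hd : x₂ - x₁ ≠ 0 := sub_ne_zero.2 h12.ne'
  have hD : x₃ - x₁ ≠ 0 := sub_ne_zero.2 (h12.trans h23).ne'
  have hδ : x₃ - x₂ ≠ 0 := sub_ne_zero.2 h23.ne'
  have hderiv : ∀ t, HasDerivAt
      (fun t => (t * h' (x₁ + t * (x₂ - x₁)) - h (x₁ + t * (x₂ - x₁)) / (x₂ - x₁)) / (x₂ - x₁)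
        - (h (x₁ + t * (x₃ - x₁)) / (x₃ - x₁) - h (x₁ + t * (x₂ - x₁)) / (x₂ - x₁)) / (x₃ - x₂))
      (leftTangentGap h' h'' (x₁ + t * (x₂ - x₁)) (x₁ + t * (x₃ - x₁)) / (x₃ - x₂)) t := by
    intro t
    have hw := hasDerivAt_comp_add_mul hh x₁ (x₂ - x₁) t
    have hv := hasDerivAt_comp_add_mul hh x₁ (x₃ - x₁) t
    refine (((((hasDerivAt_id t).mul (hasDerivAt_comp_add_mul hh' x₁ (x₂ - x₁) t)).sub
      (hw.div_const (x₂ - x₁))).div_const (x₂ - x₁)).sub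
      (((hv.div_const (x₃ - x₁)).sub (hw.div_const (x₂ - x₁))).div_const (x₃ - x₂))).congr_deriv ?_
    simp only [leftTangentGap, id]
    field_simp
    ring
  rw [integral_eq_sub_of_hasDerivAt (fun t _ => hderiv t)
    (Continuous.intervalIntegrable (by simp only [leftTangentGap]; fun_prop) _ _)]
  simp only [b₂, dd1, one_mul, zero_mul, add_zero, add_sub_cancel]
  field_simp
  ring

theorem b₃_eq_integral (hh : ∀ x, HasDerivAt h (h' x) x) (hh' : ∀ x, HasDerivAt h' (h'' x) x)
    (hc'' : Continuous h'') (h12 : x₁ < x₂) (h23 : x₂ < x₃) :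
    b₃ h h' x₁ x₂ x₃ = ∫ t in (0 : ℝ)..1,
      rightTangentGap h' h'' (x₁ + t * (x₂ - x₁)) (x₁ + t * (x₃ - x₁)) / (x₃ - x₂) := by
  have hc' : Continuous h' := continuous_iff_continuousAt.2 fun x => (hh' x).continuousAt
  have hd : x₂ - x₁ ≠ 0 := sub_ne_zero.2 h12.ne'
  have hD : x₃ - x₁ ≠ 0 := sub_ne_zero.2 (h12.trans h23).ne'
  have hδ : x₃ - x₂ ≠ 0 := sub_ne_zero.2 h23.ne'
  have hderiv : ∀ t, HasDerivAt
      (fun t =>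
        (h (x₁ + t * (x₃ - x₁)) / (x₃ - x₁) - h (x₁ + t * (x₂ - x₁)) / (x₂ - x₁)) / (x₃ - x₂)
          - (t * h' (x₁ + t * (x₃ - x₁)) - h (x₁ + t * (x₃ - x₁)) / (x₃ - x₁)) / (x₃ - x₁))
      (rightTangentGap h' h'' (x₁ + t * (x₂ - x₁)) (x₁ + t * (x₃ - x₁)) / (x₃ - x₂)) t := by
    intro t
    have hw := hasDerivAt_comp_add_mul hh x₁ (x₂ - x₁) t
    have hv := hasDerivAt_comp_add_mul hh x₁ (x₃ - x₁) t
    refine ((((hv.div_const (x₃ - x₁)).sub (hw.div_const (x₂ - x₁))).div_const (x₃ - x₂)).sub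
      ((((hasDerivAt_id t).mul (hasDerivAt_comp_add_mul hh' x₁ (x₃ - x₁) t)).sub
      (hv.div_const (x₃ - x₁))).div_const (x₃ - x₁))).congr_deriv ?_
    simp only [rightTangentGap, id]
    field_simp
    ring
  rw [integral_eq_sub_of_hasDerivAt (fun t _ => hderiv t)
    (Continuous.intervalIntegrable (by simp only [rightTangentGap]; fun_prop) _ _)]
  simp only [b₃, dd1, one_mul, zero_mul, add_zero, add_sub_cancel]
  field_simp
  ring

theorem b₁_nonneg_and_pos_iff (hh : ∀ x, HasDerivAt h (h' x) x)
    (hh' : ∀ x, HasDerivAt h' (h'' x) x) (hc'' : Continuous h'') (hanti : Antitone h'')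
    (h12 : x₁ < x₂) (h23 : x₂ < x₃) :
    0 ≤ b₁ h h' x₁ x₂ x₃ ∧ (0 < b₁ h h' x₁ x₂ x₃ ↔ h'' x₃ < h'' x₁) := by
  have hc' : Continuous h' := continuous_iff_continuousAt.2 fun x => (hh' x).continuousAt
  have hd : 0 < x₂ - x₁ := sub_pos.2 h12
  have hD : 0 < x₃ - x₁ := sub_pos.2 (h12.trans h23)
  have hδ : 0 < x₃ - x₂ := sub_pos.2 h23
  have h1w : ∀ t ∈ Icc (0 : ℝ) 1, x₁ ≤ x₁ + t * (x₂ - x₁) := fun t ht => by nlinarith [ht.1]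
  have hwv : ∀ t ∈ Icc (0 : ℝ) 1, x₁ + t * (x₂ - x₁) ≤ x₁ + t * (x₃ - x₁) :=
    fun t ht => by nlinarith [ht.1]
  have hR t (ht : t ∈ Icc (0 : ℝ) 1) := rightTangentGap_nonneg (h1w t ht) (fun x _ => hh' x)
    hc''.continuousOn (hanti.antitoneOn _)
  have hL t (ht : t ∈ Icc (0 : ℝ) 1) := leftTangentGap_nonneg (hwv t ht) (fun x _ => hh' x)
    hc''.continuousOn (hanti.antitoneOn _)
  have hψ : ∀ t ∈ Icc (0 : ℝ) 1,
      0 ≤ ((x₃ - x₂) * rightTangentGap h' h'' x₁ (x₁ + t * (x₂ - x₁)) +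
        (x₂ - x₁) * leftTangentGap h' h'' (x₁ + t * (x₂ - x₁)) (x₁ + t * (x₃ - x₁))) /
        ((x₂ - x₁) * (x₃ - x₁)) := fun t ht => by
    have := hR t ht; have := hL t ht; positivity
  rw [b₁_eq_integral hh hh' hc'' h12 h23]
  refine ⟨integral_nonneg zero_le_one hψ, ?_⟩
  rw [integral_pos_iff_exists_pos_of_nonneg zero_lt_one
    (by simp only [leftTangentGap, rightTangentGap]; fun_prop) hψ]
  have hψ_pos : ∀ t ∈ Icc (0 : ℝ) 1,
      0 < ((x₃ - x₂) * rightTangentGap h' h'' x₁ (x₁ + t * (x₂ - x₁)) +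
        (x₂ - x₁) * leftTangentGap h' h'' (x₁ + t * (x₂ - x₁)) (x₁ + t * (x₃ - x₁))) /
        ((x₂ - x₁) * (x₃ - x₁)) ↔ h'' (x₁ + t * (x₃ - x₁)) < h'' x₁ := fun t ht => by
    rw [div_pos_iff_of_pos_right (mul_pos hd hD)]
    exact mul_rightTangentGap_add_mul_leftTangentGap_pos_iff (h1w t ht) (hwv t ht)
      (fun x _ => hh' x) hc''.continuousOn (hanti.antitoneOn _) hδ hd
  rw [exists_congr fun t => and_congr_right fun ht => hψ_pos t ht]
  constructor
  · rintro ⟨t, ⟨ht₀, ht₁⟩, hlt⟩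
    exact (hanti (by nlinarith : x₁ + t * (x₃ - x₁) ≤ x₃)).trans_lt hlt
  · intro hlt
    exact ⟨1, ⟨zero_le_one, le_rfl⟩, by simpa using hlt⟩

theorem b₂_nonneg_and_pos_iff (hh : ∀ x, HasDerivAt h (h' x) x)
    (hh' : ∀ x, HasDerivAt h' (h'' x) x) (hc'' : Continuous h'') (hanti : Antitone h'')
    (h12 : x₁ < x₂) (h23 : x₂ < x₃) :
    0 ≤ b₂ h h' x₁ x₂ x₃ ∧ (0 < b₂ h h' x₁ x₂ x₃ ↔ h'' x₃ < h'' x₁) := by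
  have hc' : Continuous h' := continuous_iff_continuousAt.2 fun x => (hh' x).continuousAt
  have hδ : 0 < x₃ - x₂ := sub_pos.2 h23
  have hwv : ∀ t ∈ Icc (0 : ℝ) 1, x₁ + t * (x₂ - x₁) ≤ x₁ + t * (x₃ - x₁) :=
    fun t ht => by nlinarith [ht.1]
  have hψ : ∀ t ∈ Icc (0 : ℝ) 1,
      0 ≤ leftTangentGap h' h'' (x₁ + t * (x₂ - x₁)) (x₁ + t * (x₃ - x₁)) / (x₃ - x₂) :=
    fun t ht => div_nonneg (leftTangentGap_nonneg (hwv t ht) (fun x _ => hh' x)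
      hc''.continuousOn (hanti.antitoneOn _)) hδ.le
  rw [b₂_eq_integral hh hh' hc'' h12 h23]
  refine ⟨integral_nonneg zero_le_one hψ, ?_⟩
  rw [integral_pos_iff_exists_pos_of_nonneg zero_lt_one
    (by simp only [leftTangentGap]; fun_prop) hψ, hanti.lt_iff_exists_scaled_lt hc'' h12 h23]
  refine exists_congr fun t => and_congr_right fun ht => ?_
  rw [div_pos_iff_of_pos_right hδ]
  exact leftTangentGap_pos_iff (hwv t ht) (fun x _ => hh' x) hc''.continuousOn (hanti.antitoneOn _)

theorem b₃_nonneg_and_pos_iff (hh : ∀ x, HasDerivAt h (h' x) x)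
    (hh' : ∀ x, HasDerivAt h' (h'' x) x) (hc'' : Continuous h'') (hanti : Antitone h'')
    (h12 : x₁ < x₂) (h23 : x₂ < x₃) :
    0 ≤ b₃ h h' x₁ x₂ x₃ ∧ (0 < b₃ h h' x₁ x₂ x₃ ↔ h'' x₃ < h'' x₁) := by
  have hc' : Continuous h' := continuous_iff_continuousAt.2 fun x => (hh' x).continuousAt
  have hδ : 0 < x₃ - x₂ := sub_pos.2 h23
  have hwv : ∀ t ∈ Icc (0 : ℝ) 1, x₁ + t * (x₂ - x₁) ≤ x₁ + t * (x₃ - x₁) :=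
    fun t ht => by nlinarith [ht.1]
  have hψ : ∀ t ∈ Icc (0 : ℝ) 1,
      0 ≤ rightTangentGap h' h'' (x₁ + t * (x₂ - x₁)) (x₁ + t * (x₃ - x₁)) / (x₃ - x₂) :=
    fun t ht => div_nonneg (rightTangentGap_nonneg (hwv t ht) (fun x _ => hh' x)
      hc''.continuousOn (hanti.antitoneOn _)) hδ.le
  rw [b₃_eq_integral hh hh' hc'' h12 h23]
  refine ⟨integral_nonneg zero_le_one hψ, ?_⟩
  rw [integral_pos_iff_exists_pos_of_nonneg zero_lt_one
    (by simp only [rightTangentGap]; fun_prop) hψ, hanti.lt_iff_exists_scaled_lt hc'' h12 h23]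
  refine exists_congr fun t => and_congr_right fun ht => ?_
  rw [div_pos_iff_of_pos_right hδ]
  exact rightTangentGap_pos_iff (hwv t ht) (fun x _ => hh' x) hc''.continuousOn
    (hanti.antitoneOn _)

end DConcave

/-- For a `C²` d-concave `h` (i.e. `h'` concave) and `x₁ < x₂ < x₃`, the quantities
`b₁ = (h[x₁,x₂]-h'(x₁))/(x₂-x₁) - (h[x₁,x₃]-h'(x₁))/(x₃-x₁)`,
`b₂ = (h'(x₂)-h[x₁,x₂])/(x₂-x₁) - (h[x₂,x₃]-h[x₁,x₂])/(x₃-x₁)` and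
`b₃ = (h[x₂,x₃]-h[x₁,x₃])/(x₂-x₁) - (h'(x₃)-h[x₁,x₃])/(x₃-x₁)`
are nonnegative, and each is strictly positive iff `h''(x₁) > h''(x₃)`. -/
theorem stmt2 (h h' h'' : ℝ → ℝ)
    (hder1 : ∀ x, HasDerivAt h (h' x) x) (hder2 : ∀ x, HasDerivAt h' (h'' x) x)
    (hder2c : Continuous h'') (hdconc : ConcaveFn h')
    (x₁ x₂ x₃ : ℝ) (h12 : x₁ < x₂) (h23 : x₂ < x₃) :
    (0 ≤ (dd1 h x₁ x₂ - h' x₁) / (x₂ - x₁) - (dd1 h x₁ x₃ - h' x₁) / (x₃ - x₁) ∧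
     0 ≤ (h' x₂ - dd1 h x₁ x₂) / (x₂ - x₁) - (dd1 h x₂ x₃ - dd1 h x₁ x₂) / (x₃ - x₁) ∧
     0 ≤ (dd1 h x₂ x₃ - dd1 h x₁ x₃) / (x₂ - x₁) - (h' x₃ - dd1 h x₁ x₃) / (x₃ - x₁)) ∧
    ((0 < (dd1 h x₁ x₂ - h' x₁) / (x₂ - x₁) - (dd1 h x₁ x₃ - h' x₁) / (x₃ - x₁) ↔
        h'' x₃ < h'' x₁) ∧
     (0 < (h' x₂ - dd1 h x₁ x₂) / (x₂ - x₁) - (dd1 h x₂ x₃ - dd1 h x₁ x₂) / (x₃ - x₁) ↔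
        h'' x₃ < h'' x₁) ∧
     (0 < (dd1 h x₂ x₃ - dd1 h x₁ x₃) / (x₂ - x₁) - (h' x₃ - dd1 h x₁ x₃) / (x₃ - x₁) ↔
        h'' x₃ < h'' x₁)) := by
  have hanti : Antitone h'' := hdconc.antitone_of_hasDerivAt hder2
  obtain ⟨hb₁, hb₁_pos⟩ := DConcave.b₁_nonneg_and_pos_iff hder1 hder2 hder2c hanti h12 h23
  obtain ⟨hb₂, hb₂_pos⟩ := DConcave.b₂_nonneg_and_pos_iff hder1 hder2 hder2c hanti h12 h23
  obtain ⟨hb₃, hb₃_pos⟩ := DConcave.b₃_nonneg_and_pos_iff hder1 hder2 hder2c hanti h12 h23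
  exact ⟨⟨hb₁, hb₂, hb₃⟩, hb₁_pos, hb₂_pos, hb₃_pos⟩
end

section
/- Let h:ℝ×ℝ→ℝ be C¹-admissible and let Ω_h be its hull. If the equation x'=h(t,x) has a bounded solution, then for every ω∈Ω_h the equation x'=ω(t,x) has a bounded solution. More generally, if x'=h(t,x) has n uniformly separated solutions b₁<b₂<⋯<b_n, then for every ω∈Ω_h the equation x'=ω(t,x) has n uniformly separated solutions. -/
open Set Filter Topology MeasureTheory

/-- `h` is admissible: continuous, and bounded and uniformly continuous on `ℝ × J`
for every compact `J ⊆ ℝ`. -/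
def Admissible (h : ℝ → ℝ → ℝ) : Prop :=
  Continuous (fun p : ℝ × ℝ => h p.1 p.2) ∧
  ∀ J : Set ℝ, IsCompact J →
    (∃ C : ℝ, ∀ t : ℝ, ∀ x ∈ J, |h t x| ≤ C) ∧
    UniformContinuousOn (fun p : ℝ × ℝ => h p.1 p.2) (Set.univ ×ˢ J)

/-- `h` is `C¹`-admissible with partial derivative `hx` with respect to the state variable. -/
def C1Admissible (h hx : ℝ → ℝ → ℝ) : Prop :=
  Admissible h ∧ (∀ t x : ℝ, HasDerivAt (fun y => h t y) (hx t x) x) ∧ Admissible hx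

/-- `ξ` solves `x' = h(t,x)` on the set `I`. -/
def IsSolOn (h : ℝ → ℝ → ℝ) (ξ : ℝ → ℝ) (I : Set ℝ) : Prop :=
  ∀ t ∈ I, HasDerivAt ξ (h t (ξ t)) t

/-- `ξ` is a globally defined bounded solution of `x' = h(t,x)`. -/
def IsBoundedSol (h : ℝ → ℝ → ℝ) (ξ : ℝ → ℝ) : Prop :=
  (∀ t : ℝ, HasDerivAt ξ (h t (ξ t)) t) ∧ ∃ C : ℝ, ∀ t : ℝ, |ξ t| ≤ C

/-- Two globally defined functions are uniformly separated. -/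
def UnifSep (b₁ b₂ : ℝ → ℝ) : Prop := ∃ d > 0, ∀ t : ℝ, d ≤ |b₁ t - b₂ t|

/-- `b` satisfies the attractive exponential dichotomy estimate with pair `(k,γ)`
for the variational equation along `b` of `x' = h(t,x)`, where `hx` is `h_x`. -/
def IsHypAttrPair (hx : ℝ → ℝ → ℝ) (b : ℝ → ℝ) (k γ : ℝ) : Prop :=
  1 ≤ k ∧ 0 < γ ∧ ∀ s t : ℝ, s ≤ t →
    Real.exp (∫ r in s..t, hx r (b r)) ≤ k * Real.exp (-γ * (t - s))

/-- `b` satisfies the repulsive exponential dichotomy estimate with pair `(k,γ)`. -/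
def IsHypRepPair (hx : ℝ → ℝ → ℝ) (b : ℝ → ℝ) (k γ : ℝ) : Prop :=
  1 ≤ k ∧ 0 < γ ∧ ∀ s t : ℝ, t ≤ s →
    Real.exp (∫ r in s..t, hx r (b r)) ≤ k * Real.exp (γ * (t - s))

/-- `b` is a hyperbolic attractive solution of `x' = h(t,x)`. -/
def IsHypAttr (h hx : ℝ → ℝ → ℝ) (b : ℝ → ℝ) : Prop :=
  IsBoundedSol h b ∧ ∃ k γ : ℝ, IsHypAttrPair hx b k γ

/-- `b` is a hyperbolic repulsive solution of `x' = h(t,x)`. -/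
def IsHypRep (h hx : ℝ → ℝ → ℝ) (b : ℝ → ℝ) : Prop :=
  IsBoundedSol h b ∧ ∃ k γ : ℝ, IsHypRepPair hx b k γ

/-- `b` is a hyperbolic solution of `x' = h(t,x)`. -/
def IsHypSol (h hx : ℝ → ℝ → ℝ) (b : ℝ → ℝ) : Prop :=
  IsHypAttr h hx b ∨ IsHypRep h hx b

/-- `(a, r)` is an attractor-repeller pair of solutions of `x' = h(t,x)`. -/
def ARPair (h hx : ℝ → ℝ → ℝ) (a r : ℝ → ℝ) : Prop :=
  IsHypAttr h hx a ∧ IsHypRep h hx r ∧ UnifSep a r ∧ ∀ t : ℝ, r t < a t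

/-- Case A: existence of an attractor-repeller pair of solutions. -/
def CaseA (h hx : ℝ → ℝ → ℝ) : Prop := ∃ a r : ℝ → ℝ, ARPair h hx a r

/-- Case B: there are bounded solutions but no hyperbolic ones. -/
def CaseB (h hx : ℝ → ℝ → ℝ) : Prop :=
  (∃ b : ℝ → ℝ, IsBoundedSol h b) ∧ ∀ b : ℝ → ℝ, ¬ IsHypSol h hx b

/-- Case C: there are no bounded solutions. -/
def CaseC (h : ℝ → ℝ → ℝ) : Prop := ¬ ∃ b : ℝ → ℝ, IsBoundedSol h b

/-- `lim_{t → -∞} (g(t,x) - gm(t,x)) = 0` uniformly on each compact subset of `ℝ`. -/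
def LimAtBot (g gm : ℝ → ℝ → ℝ) : Prop :=
  ∀ J : Set ℝ, IsCompact J → ∀ ε > 0, ∃ T : ℝ, ∀ t ≤ T, ∀ x ∈ J, |g t x - gm t x| < ε

/-- `lim_{t → +∞} (g(t,x) - gp(t,x)) = 0` uniformly on each compact subset of `ℝ`. -/
def LimAtTop (g gp : ℝ → ℝ → ℝ) : Prop :=
  ∀ J : Set ℝ, IsCompact J → ∀ ε > 0, ∃ T : ℝ, ∀ t ≥ T, ∀ x ∈ J, |g t x - gp t x| < ε

/-- Coercivity: `limsup_{x → ±∞} h(t,x) < 0` uniformly on `ℝ`. -/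
def Coercive (h : ℝ → ℝ → ℝ) : Prop :=
  ∃ δ > 0, ∃ ρ > 0, ∀ t x : ℝ, ρ ≤ |x| → h t x ≤ -δ

/-- Uniform strict decrease of `t ↦ hx(t, ·)`:
`inf_{t∈ℝ} (hx(t,x₁) - hx(t,x₂)) > 0` whenever `x₁ < x₂`. -/
def StrictDecDiff (hx : ℝ → ℝ → ℝ) : Prop :=
  ∀ x₁ x₂ : ℝ, x₁ < x₂ → ∃ c > 0, ∀ t : ℝ, c ≤ hx t x₁ - hx t x₂

/-- Conditions gc1–gc5 on a transition map `g` with limit maps `gm`, `gp`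
(`gx`, `gmx`, `gpx` are the respective derivatives with respect to the state variable). -/
def GC (g gx gm gmx gp gpx : ℝ → ℝ → ℝ) : Prop :=
  C1Admissible g gx ∧ C1Admissible gm gmx ∧ C1Admissible gp gpx ∧
  LimAtBot g gm ∧ LimAtTop g gp ∧
  Coercive g ∧ Coercive gm ∧ Coercive gp ∧
  StrictDecDiff gmx ∧ StrictDecDiff gpx ∧
  CaseA gm gmx ∧ CaseA gp gpx

/-- `b` is a locally pullback attractive solution of `x' = g(t,x)`. -/
def LocPullbackAttr (g : ℝ → ℝ → ℝ) (b : ℝ → ℝ) : Prop :=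
  ∃ s₀ : ℝ, ∃ δ > 0, ∃ ξp ξm : ℝ → ℝ → ℝ,
    (∀ s ≤ s₀, IsSolOn g (ξp s) (Set.Icc s s₀) ∧ ξp s s = b s + δ ∧
               IsSolOn g (ξm s) (Set.Icc s s₀) ∧ ξm s s = b s - δ) ∧
    ∀ t ≤ s₀, Tendsto (fun s => |b t - ξp s t|) atBot (nhds 0) ∧
              Tendsto (fun s => |b t - ξm s t|) atBot (nhds 0)

/-- `b` is a locally pullback repulsive solution of `x' = g(t,x)`. -/
def LocPullbackRep (g : ℝ → ℝ → ℝ) (b : ℝ → ℝ) : Prop :=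
  ∃ s₀ : ℝ, ∃ δ > 0, ∃ ξp ξm : ℝ → ℝ → ℝ,
    (∀ s ≥ s₀, IsSolOn g (ξp s) (Set.Icc s₀ s) ∧ ξp s s = b s + δ ∧
               IsSolOn g (ξm s) (Set.Icc s₀ s) ∧ ξm s s = b s - δ) ∧
    ∀ t ≥ s₀, Tendsto (fun s => |b t - ξp s t|) atTop (nhds 0) ∧
              Tendsto (fun s => |b t - ξm s t|) atTop (nhds 0)

/-- The time shift `(H·s)(t,x) = H(t+s,x)` as a continuous map. -/
noncomputable def shiftCM (H : C(ℝ × ℝ, ℝ)) (s : ℝ) : C(ℝ × ℝ, ℝ) :=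
  H.comp ⟨fun p => (p.1 + s, p.2), by fun_prop⟩

/-- The hull of `H`: the closure of the set of time shifts of `H` in `C(ℝ×ℝ,ℝ)`
with the compact-open topology. -/
noncomputable def hullSet (H : C(ℝ × ℝ, ℝ)) : Set C(ℝ × ℝ, ℝ) :=
  closure (Set.range (shiftCM H))

/-! An element `ω` of the hull is the limit of the shifts `H·s` along some ultrafilter `U` on `ℝ`.
The shifts `b(· + s)` of a bounded solution are uniformly bounded, so they converge pointwise
along `U` to some `c`. Their derivatives `r ↦ h(r + s, b(r + s))` are the shifts of a single
uniformly continuous function, hence equicontinuous, and by the uniform continuity of `h` on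
`ℝ × [-C, C]` (`C` a bound for `b`) they converge to `ω(t, c t)`; the mean value inequality then
passes to the limit and gives `c' = ω(t, c)`. Lower bounds on `|bᵢ - bⱼ|` survive pointwise limits. -/

open scoped Uniformity

theorem exists_ultrafilter_tendsto_of_mem_closure_range {α X : Type*} [TopologicalSpace X]
    {f : α → X} {x : X} (hx : x ∈ closure (range f)) : ∃ U : Ultrafilter α, Tendsto f U (𝓝 x) := by
  rw [mem_closure_iff_clusterPt, ← map_top] at hx
  obtain ⟨U, -, hU⟩ := mapClusterPt_iff_ultrafilter.1 hx
  exact ⟨U, hU⟩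

theorem UniformContinuous.uniformEquicontinuous_comp_add_right {E β : Type*}
    [SeminormedAddCommGroup E] [PseudoMetricSpace β] {g : E → β} (hg : UniformContinuous g) :
    UniformEquicontinuous fun (s : E) r => g (r + s) := by
  rw [Metric.uniformEquicontinuous_iff]
  intro ε hε
  obtain ⟨δ, hδ, hg⟩ := Metric.uniformContinuous_iff.1 hg ε hε
  exact ⟨δ, hδ, fun x y hxy s => hg (by rwa [dist_add_right])⟩

theorem hasDerivAt_of_tendsto_of_equicontinuousAt {ι : Type*} {l : Filter ι} [l.NeBot]
    {F F' : ι → ℝ → ℝ} {f : ℝ → ℝ} {x y : ℝ}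
    (hF : ∀ i z, HasDerivAt (F i) (F' i z) z) (hF' : EquicontinuousAt F' x)
    (hf : ∀ z, Tendsto (fun i => F i z) l (𝓝 (f z)))
    (hy : Tendsto (fun i => F' i x) l (𝓝 y)) : HasDerivAt f y x := by
  rw [hasDerivAt_iff_isLittleO, Asymptotics.isLittleO_iff]
  intro ε hε
  obtain ⟨δ, hδ, hclose⟩ := Metric.equicontinuousAt_iff.1 hF' ε hε
  filter_upwards [Metric.ball_mem_nhds x hδ] with z hz
  have hmvt : ∀ i, |F i z - F i x - (z - x) * F' i x| ≤ ε * |z - x| := by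
    intro i
    have hderiv : ∀ r ∈ Metric.ball x δ, HasDerivWithinAt (fun r => F i r - r * F' i x)
        (F' i r - F' i x) (Metric.ball x δ) r := fun r _ => by
      have := (hF i r).sub ((hasDerivAt_id' r).mul_const (F' i x))
      rw [one_mul] at this
      exact this.hasDerivWithinAt
    have hbound : ∀ r ∈ Metric.ball x δ, ‖F' i r - F' i x‖ ≤ ε := fun r hr => by
      rw [← dist_eq_norm, dist_comm]
      exact (hclose r hr i).le
    have := (convex_ball x δ).norm_image_sub_le_of_norm_hasDerivWithin_le hderiv hbound
      (Metric.mem_ball_self hδ) hz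
    simp only [Real.norm_eq_abs] at this
    convert this using 2
    ring
  have hlim := (((hf z).sub (hf x)).sub (hy.const_mul (z - x))).abs
  simpa only [Real.norm_eq_abs, smul_eq_mul] using le_of_tendsto' hlim hmvt

theorem IsBoundedSol.uniformContinuous_rhs {h : ℝ → ℝ → ℝ} (hadm : Admissible h) {b : ℝ → ℝ}
    (hb : IsBoundedSol h b) : UniformContinuous fun t => h t (b t) := by
  obtain ⟨hder, C, hC⟩ := hb
  obtain ⟨⟨M, hM⟩, hUC⟩ := hadm.2 (Icc (-C) C) isCompact_Icc
  have hLip : LipschitzWith M.toNNReal b := by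
    refine lipschitzOnWith_univ.1 <| convex_univ.lipschitzOnWith_of_nnnorm_hasDerivWithin_le
      (fun t _ => (hder t).hasDerivWithinAt) fun t _ => ?_
    rw [← NNReal.coe_le_coe, coe_nnnorm, Real.coe_toNNReal']
    exact le_max_of_le_left (hM t _ (abs_le.1 (hC t)))
  have hgraph : UniformContinuous fun t => (t, b t) :=
    uniformContinuous_id.prodMk hLip.uniformContinuous
  exact uniformContinuousOn_univ.1 <|
    hUC.comp (uniformContinuousOn_univ.2 hgraph) fun t _ => ⟨mem_univ t, abs_le.1 (hC t)⟩

theorem tendsto_shiftCM_apply {H ω : C(ℝ × ℝ, ℝ)} {J : Set ℝ}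
    (hUC : UniformContinuousOn (fun p : ℝ × ℝ => H (p.1, p.2)) (univ ×ˢ J))
    {l : Filter ℝ} (hω : Tendsto (shiftCM H) l (𝓝 ω)) {u : ℝ → ℝ} {y : ℝ}
    (hu : ∀ s, u s ∈ J) (hyJ : y ∈ J) (hy : Tendsto u l (𝓝 y)) (t : ℝ) :
    Tendsto (fun s => H (t + s, u s)) l (𝓝 (ω (t, y))) := by
  have hshift : Tendsto (fun s => H (t + s, y)) l (𝓝 (ω (t, y))) :=
    ((continuous_eval_const (t, y)).tendsto ω).comp hω
  have hclose : Tendsto (fun s => ((t + s, y), (t + s, u s))) l (𝓤 (ℝ × ℝ)) := by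
    rw [tendsto_uniformity_iff_dist_tendsto_zero]
    simpa [Prod.dist_eq, dist_comm y] using tendsto_iff_dist_tendsto_zero.1 hy
  refine hshift.congr_uniformity (Tendsto.comp hUC (tendsto_inf.2 ⟨hclose, tendsto_principal.2 ?_⟩))
  exact Eventually.of_forall fun s => ⟨⟨mem_univ _, hyJ⟩, ⟨mem_univ _, hu s⟩⟩

theorem IsBoundedSol.of_tendsto_shift {H ω : C(ℝ × ℝ, ℝ)} (hadm : Admissible fun t x => H (t, x))
    {l : Filter ℝ} [l.NeBot] (hω : Tendsto (shiftCM H) l (𝓝 ω)) {b c : ℝ → ℝ}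
    (hb : IsBoundedSol (fun t x => H (t, x)) b)
    (hc : ∀ t, Tendsto (fun s => b (t + s)) l (𝓝 (c t))) :
    IsBoundedSol (fun t x => ω (t, x)) c := by
  have hrhs := (hb.uniformContinuous_rhs hadm).uniformEquicontinuous_comp_add_right
  obtain ⟨hder, C, hC⟩ := hb
  have hbJ : ∀ t, b t ∈ Icc (-C) C := fun t => abs_le.1 (hC t)
  have hcJ : ∀ t, c t ∈ Icc (-C) C := fun t =>
    isClosed_Icc.mem_of_tendsto (hc t) (Eventually.of_forall fun s => hbJ (t + s))
  refine ⟨fun t => ?_, C, fun t => abs_le.2 (hcJ t)⟩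
  refine hasDerivAt_of_tendsto_of_equicontinuousAt (F := fun s r => b (r + s))
    (fun s r => (hder (r + s)).comp_add_const r s) (hrhs.equicontinuous t) hc ?_
  exact tendsto_shiftCM_apply (hadm.2 _ isCompact_Icc).2 hω (fun s => hbJ (t + s)) (hcJ t) (hc t) t

theorem UnifSep.of_tendsto_shift {l : Filter ℝ} [l.NeBot] {b₁ b₂ c₁ c₂ : ℝ → ℝ}
    (hb : UnifSep b₁ b₂) (h₁ : ∀ t, Tendsto (fun s => b₁ (t + s)) l (𝓝 (c₁ t)))
    (h₂ : ∀ t, Tendsto (fun s => b₂ (t + s)) l (𝓝 (c₂ t))) : UnifSep c₁ c₂ := by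
  obtain ⟨d, hd, hsep⟩ := hb
  exact ⟨d, hd, fun t =>
    ge_of_tendsto ((h₁ t).sub (h₂ t)).abs (Eventually.of_forall fun s => hsep (t + s))⟩

theorem exists_boundedSol_of_mem_hullSet {H ω : C(ℝ × ℝ, ℝ)}
    (hadm : Admissible fun t x => H (t, x)) (hω : ω ∈ hullSet H) {ι : Type*} {b : ι → ℝ → ℝ}
    (hb : ∀ i, IsBoundedSol (fun t x => H (t, x)) (b i)) :
    ∃ c : ι → ℝ → ℝ, (∀ i, IsBoundedSol (fun t x => ω (t, x)) (c i)) ∧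
      ∀ i j, UnifSep (b i) (b j) → UnifSep (c i) (c j) := by
  obtain ⟨U, hU⟩ := exists_ultrafilter_tendsto_of_mem_closure_range hω
  have hlim : ∀ i t, ∃ y, Tendsto (fun s => b i (t + s)) U (𝓝 y) := by
    intro i t
    obtain ⟨C, hC⟩ := (hb i).2
    obtain ⟨y, -, hy⟩ := isCompact_Icc.ultrafilter_le_nhds' (U.map fun s => b i (t + s))
      (Ultrafilter.mem_map.2 (univ_mem' fun s => abs_le.1 (hC (t + s))))
    exact ⟨y, hy⟩
  choose c hc using hlim
  exact ⟨c, fun i => (hb i).of_tendsto_shift hadm hU (hc i),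
    fun i j hij => hij.of_tendsto_shift (hc i) (hc j)⟩

/-- If `x' = h(t,x)` has a bounded solution (resp. `n` uniformly separated solutions
`b₁ < ⋯ < b_n`), then for every element `ω` of the hull of `h` the equation
`x' = ω(t,x)` has a bounded solution (resp. `n` uniformly separated solutions). -/
theorem stmt4 (h hx : ℝ → ℝ → ℝ) (hadm : C1Admissible h hx)
    (H : C(ℝ × ℝ, ℝ)) (hH : ∀ t x : ℝ, H (t, x) = h t x) :
    ((∃ b : ℝ → ℝ, IsBoundedSol h b) →
      ∀ ω ∈ hullSet H, ∃ b : ℝ → ℝ, IsBoundedSol (fun t x => ω (t, x)) b) ∧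
    (∀ n : ℕ, ∀ b : Fin n → ℝ → ℝ,
      (∀ i, IsBoundedSol h (b i)) →
      (∀ i j : Fin n, i < j → ∀ t : ℝ, b i t < b j t) →
      (∀ i j : Fin n, i ≠ j → UnifSep (b i) (b j)) →
      ∀ ω ∈ hullSet H, ∃ c : Fin n → ℝ → ℝ,
        (∀ i, IsBoundedSol (fun t x => ω (t, x)) (c i)) ∧
        (∀ i j : Fin n, i ≠ j → UnifSep (c i) (c j))) := by
  obtain rfl : h = fun t x => H (t, x) := funext₂ fun t x => (hH t x).symm
  refine ⟨fun ⟨b, hb⟩ ω hω => ?_, fun n b hb _ hsep ω hω => ?_⟩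
  · obtain ⟨c, hc, -⟩ := exists_boundedSol_of_mem_hullSet hadm.1 hω fun _ : Unit => hb
    exact ⟨c (), hc ()⟩
  · obtain ⟨c, hc, hcsep⟩ := exists_boundedSol_of_mem_hullSet hadm.1 hω hb
    exact ⟨c, hc, fun i j hij => hcsep i j (hsep i j hij)⟩
end

section
/- Let h be C¹-admissible, let b̃_h be a hyperbolic attractive solution of x'=h(t,x) with dichotomy constant pair (k₀,γ₀), and let ρ>sup_{t∈ℝ}|b̃_h(t)|. Then for every γ∈(0,γ₀) and every ε>0 there exist δ_ε>0 and ρ_ε>0 such that for every C¹-admissible g with ‖h−g‖_{1,ρ}<δ_ε: (i) x'=g(t,x) has a hyperbolic attractive solution b̃_g with dichotomy constant pair (k₀,γ) satisfying sup_{t∈ℝ}|b̃_h(t)−b̃_g(t)|<ε; (ii) whenever |b̃_g(t₀)−x₀|≤ρ_ε, the solution of x'=g(t,x) with value x₀ at time t₀ is defined for all t≥t₀ and satisfies |b̃_g(t)−x_g(t,t₀,x₀)| ≤ k₀·e^{−γ(t−t₀)}·|b̃_g(t₀)−x₀| for all t≥t₀. The analogous statement holds for hyperbolic repulsive solutions,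 with the estimates holding for t≤t₀. -/
open Set Filter Topology MeasureTheory

/-- The norm `‖h‖_{1,ρ} = sup_{ℝ×[-ρ,ρ]} |h| + sup_{ℝ×[-ρ,ρ]} |h_x|`. -/
noncomputable def norm1 (h hx : ℝ → ℝ → ℝ) (ρ : ℝ) : ℝ :=
  (⨆ p : ℝ × (Set.Icc (-ρ) ρ), |h p.1 (p.2 : ℝ)|) +
  (⨆ p : ℝ × (Set.Icc (-ρ) ρ), |hx p.1 (p.2 : ℝ)|)

/-!
Write a solution of `x' = g(t,x)` near `b` as `b + u`. Then `u' = h_x(t,b) u + F(t,u)`, where `F`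
is small and, near `0`, Lipschitz with a small constant as soon as `‖h - g‖_{1,ρ}` is small.
Perron's formula `u t = ∫_{-∞}^t exp (∫_s^t h_x(r,b)) F(s,u s) ds` is then a contraction on a
small ball of bounded continuous functions, and its fixed point gives `b_g`. Along `b_g`, `g_x`
stays close to `h_x(·,b)`, so the dichotomy survives with a slightly smaller rate. Near `b_g` the
same argument on `[t₀, ∞)`, with Duhamel's formula in place of Perron's, produces the solution
through `(t₀, x₀)`, and Grönwall's inequality gives the decay estimate with the same constant
`k₀`. The repulsive case is the attractive one after reversing time.
-/

open Real intervalIntegral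
open scoped BoundedContinuousFunction

theorem exists_fixedPoint_of_sup_contraction {α : Type*} [TopologicalSpace α] {r K : ℝ}
    (hr : 0 ≤ r) (hK : K < 1) (Φ : (α → ℝ) → α → ℝ)
    (hmaps : ∀ u : α → ℝ, Continuous u → (∀ t, |u t| ≤ r) →
      Continuous (Φ u) ∧ ∀ t, |Φ u t| ≤ r)
    (hlip : ∀ u v : α → ℝ, Continuous u → Continuous v → (∀ t, |u t| ≤ r) → (∀ t, |v t| ≤ r) →
      ∀ D, (∀ t, |u t - v t| ≤ D) → ∀ t, |Φ u t - Φ v t| ≤ K * D) :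
    ∃ u : α → ℝ, Continuous u ∧ (∀ t, |u t| ≤ r) ∧ Φ u = u := by
  set S := Metric.closedBall (0 : α →ᵇ ℝ) r
  have : CompleteSpace S := Metric.isClosed_closedBall.completeSpace_coe
  have : Nonempty S := ⟨⟨0, Metric.mem_closedBall_self hr⟩⟩
  have hS : ∀ u : S, ∀ t, |(u : α →ᵇ ℝ) t| ≤ r := fun u =>
    (BoundedContinuousFunction.norm_le hr).1 (mem_closedBall_zero_iff.1 u.2)
  let Ψ : S → S := fun u =>
    ⟨.ofNormedAddCommGroup (Φ u) (hmaps u u.1.continuous (hS u)).1 r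
      (hmaps u u.1.continuous (hS u)).2,
     mem_closedBall_zero_iff.2 <| (BoundedContinuousFunction.norm_le hr).2
      (hmaps u u.1.continuous (hS u)).2⟩
  have hΨ : ContractingWith K.toNNReal Ψ := by
    refine ⟨by simpa using hK, LipschitzWith.of_dist_le_mul fun u v => ?_⟩
    refine (BoundedContinuousFunction.dist_le (by positivity)).2 fun t => ?_
    calc |Φ u t - Φ v t| ≤ K * dist u v :=
          hlip u v u.1.continuous v.1.continuous (hS u) (hS v) _
            (fun s => BoundedContinuousFunction.dist_coe_le_dist (f := u.1) (g := v.1) s) t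
      _ ≤ K.toNNReal * dist u v := by gcongr; exact Real.le_coe_toNNReal K
  set u := ContractingWith.fixedPoint Ψ hΨ
  refine ⟨u.1, u.1.continuous, hS u, funext fun t => ?_⟩
  exact congrArg (fun w : S => (w : α →ᵇ ℝ) t) hΨ.fixedPoint_isFixedPt

theorem integral_exp_neg_mul_sub_le {γ : ℝ} (hγ : 0 < γ) (a t : ℝ) :
    ∫ s in a..t, exp (-γ * (t - s)) ≤ 1 / γ := by
  have hderiv : ∀ s ∈ uIcc a t,
      HasDerivAt (fun s => exp (-γ * (t - s)) / γ) (exp (-γ * (t - s))) s := fun s _ => by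
    refine (((((hasDerivAt_id s).const_sub t).const_mul (-γ)).exp).div_const γ).congr_deriv ?_
    field_simp
    simp
  rw [integral_eq_sub_of_hasDerivAt hderiv (Continuous.intervalIntegrable (by fun_prop) _ _)]
  have : 0 ≤ exp (-γ * (t - a)) / γ := by positivity
  simp only [sub_self, mul_zero, exp_zero]
  linarith

theorem exp_neg_mul_sub_eq (γ t : ℝ) :
    (fun s => exp (-γ * (t - s))) = fun s => exp (-γ * t) * exp (γ * s) := by
  ext s; rw [← exp_add]; ring_nf

theorem integrableOn_exp_neg_mul_sub_Iic {γ : ℝ} (hγ : 0 < γ) (t : ℝ) :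
    IntegrableOn (fun s => exp (-γ * (t - s))) (Iic t) := by
  rw [exp_neg_mul_sub_eq]
  exact (integrableOn_exp_mul_Iic hγ t).const_mul _

theorem integral_exp_neg_mul_sub_Iic {γ : ℝ} (hγ : 0 < γ) (t : ℝ) :
    ∫ s in Iic t, exp (-γ * (t - s)) = 1 / γ := by
  rw [exp_neg_mul_sub_eq, MeasureTheory.integral_const_mul, integral_exp_mul_Iic hγ,
    mul_div_assoc', ← exp_add]
  simp

def IsExpContracting (P : ℝ → ℝ) (k γ : ℝ) : Prop :=
  ∀ s t : ℝ, s ≤ t → exp (P t - P s) ≤ k * exp (-γ * (t - s))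

theorem isExpContracting_integral {p : ℝ → ℝ} (hp : Continuous p) {k γ : ℝ}
    (h : ∀ s t : ℝ, s ≤ t → exp (∫ r in s..t, p r) ≤ k * exp (-γ * (t - s))) :
    IsExpContracting (fun t => ∫ r in (0 : ℝ)..t, p r) k γ := fun s t hst => by
  rw [integral_interval_sub_left (hp.intervalIntegrable _ _) (hp.intervalIntegrable _ _)]
  exact h s t hst

/-- The bounded solution `∫_{-∞}^t exp (P t - P s) f s ds` of `x' = P' x + f`. -/
noncomputable def perronSol (P f : ℝ → ℝ) (t : ℝ) : ℝ :=
  exp (P t) * ∫ s in Iic t, exp (-P s) * f s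

namespace IsExpContracting

variable {P f : ℝ → ℝ} {k γ C : ℝ}

theorem one_le (hP : IsExpContracting P k γ) : 1 ≤ k := by
  simpa using hP 0 0 le_rfl

theorem norm_exp_neg_mul_le (hP : IsExpContracting P k γ) (hf : ∀ s, |f s| ≤ C) {s t : ℝ}
    (hst : s ≤ t) : ‖exp (-P s) * f s‖ ≤ exp (-P t) * k * C * exp (-γ * (t - s)) := by
  have hk : 0 ≤ k := zero_le_one.trans hP.one_le
  rw [norm_mul, Real.norm_of_nonneg (exp_pos _).le, Real.norm_eq_abs,
    show -P s = -P t + (P t - P s) by ring, exp_add]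
  calc exp (-P t) * exp (P t - P s) * |f s|
      ≤ exp (-P t) * (k * exp (-γ * (t - s))) * C := by gcongr; exacts [hP s t hst, hf s]
    _ = exp (-P t) * k * C * exp (-γ * (t - s)) := by ring

theorem integrableOn_Iic (hP : IsExpContracting P k γ) (hγ : 0 < γ) (hPc : Continuous P)
    (hfc : Continuous f) (hf : ∀ s, |f s| ≤ C) (t : ℝ) :
    IntegrableOn (fun s => exp (-P s) * f s) (Iic t) :=
  Integrable.mono' ((integrableOn_exp_neg_mul_sub_Iic hγ t).const_mul _)
    (by fun_prop : Continuous fun s => exp (-P s) * f s).aestronglyMeasurable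
    (ae_restrict_of_forall_mem measurableSet_Iic fun _ hs => hP.norm_exp_neg_mul_le hf hs)

theorem abs_perronSol_le (hP : IsExpContracting P k γ) (hγ : 0 < γ) (hf : ∀ s, |f s| ≤ C)
    (t : ℝ) : |perronSol P f t| ≤ k * C / γ := by
  have h := norm_integral_le_of_norm_le ((integrableOn_exp_neg_mul_sub_Iic hγ t).const_mul _)
    (ae_restrict_of_forall_mem measurableSet_Iic fun _ hs => hP.norm_exp_neg_mul_le hf hs)
  rw [MeasureTheory.integral_const_mul, integral_exp_neg_mul_sub_Iic hγ] at h
  rw [perronSol, abs_mul, abs_of_pos (exp_pos _), ← Real.norm_eq_abs]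
  calc exp (P t) * ‖∫ s in Iic t, exp (-P s) * f s‖
      ≤ exp (P t) * (exp (-P t) * k * C * (1 / γ)) := by gcongr
    _ = k * C / γ := by rw [exp_neg]; field_simp

end IsExpContracting

section

variable {P p f : ℝ → ℝ}

theorem hasDerivAt_perronSol (hP' : ∀ t, HasDerivAt P (p t) t) (hfc : Continuous f)
    (hint : ∀ t, IntegrableOn (fun s => exp (-P s) * f s) (Iic t)) (t : ℝ) :
    HasDerivAt (perronSol P f) (p t * perronSol P f t + f t) t := by
  have hPc : Continuous P := continuous_iff_continuousAt.2 fun t => (hP' t).continuousAt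
  have hI : HasDerivAt (fun u => ∫ s in Iic u, exp (-P s) * f s) (exp (-P t) * f t) t := by
    refine (((by fun_prop : Continuous fun s => exp (-P s) * f s).integral_hasStrictDerivAt
      t t).hasDerivAt.const_add (∫ s in Iic t, exp (-P s) * f s)).congr_of_eventuallyEq
      (Eventually.of_forall fun u => ?_)
    dsimp only
    rw [← integral_Iic_sub_Iic (hint t) (hint u)]
    ring
  refine ((hP' t).exp.mul hI).congr_deriv ?_
  rw [perronSol, exp_neg]
  field_simp

theorem perronSol_sub {g : ℝ → ℝ} (hf : IntegrableOn (fun s => exp (-P s) * f s) (Iic t))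
    (hg : IntegrableOn (fun s => exp (-P s) * g s) (Iic t)) :
    perronSol P f t - perronSol P g t = perronSol P (fun s => f s - g s) t := by
  simp only [perronSol, ← mul_sub, ← integral_sub hf hg]

end

theorem exists_bounded_solution_of_isExpContracting {P p : ℝ → ℝ} {k γ : ℝ}
    (hP' : ∀ t, HasDerivAt P (p t) t) (hP : IsExpContracting P k γ) (hγ : 0 < γ)
    {F : ℝ → ℝ → ℝ} (hF : Continuous fun z : ℝ × ℝ => F z.1 z.2) {e B L : ℝ} (he : 0 ≤ e)
    (hL₀ : 0 ≤ L) (hB : ∀ s y, |y| ≤ e → |F s y| ≤ B)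
    (hL : ∀ s y₁ y₂, |y₁| ≤ e → |y₂| ≤ e → |F s y₁ - F s y₂| ≤ L * |y₁ - y₂|)
    (hball : k * B ≤ γ * e) (hcontr : k * L < γ) :
    ∃ u : ℝ → ℝ, (∀ t, |u t| ≤ e) ∧ ∀ t, HasDerivAt u (p t * u t + F t (u t)) t := by
  have hPc : Continuous P := continuous_iff_continuousAt.2 fun t => (hP' t).continuousAt
  have hFu : ∀ u : ℝ → ℝ, Continuous u → Continuous fun s => F s (u s) := fun u hu =>
    hF.comp (continuous_id.prodMk hu)
  have hint : ∀ u : ℝ → ℝ, Continuous u → (∀ t, |u t| ≤ e) →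
      ∀ t, IntegrableOn (fun s => exp (-P s) * F s (u s)) (Iic t) := fun u hu hue =>
    hP.integrableOn_Iic hγ hPc (hFu u hu) fun s => hB s _ (hue s)
  have hderiv : ∀ u : ℝ → ℝ, Continuous u → (∀ t, |u t| ≤ e) → ∀ t,
      HasDerivAt (perronSol P fun s => F s (u s))
        (p t * perronSol P (fun s => F s (u s)) t + F t (u t)) t := fun u hu hue =>
    hasDerivAt_perronSol hP' (hFu u hu) (hint u hu hue)
  obtain ⟨u, hu, hue, hfix⟩ := exists_fixedPoint_of_sup_contraction he
    ((div_lt_one hγ).2 hcontr) (fun u => perronSol P fun s => F s (u s))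
    (fun u hu hue => ⟨continuous_iff_continuousAt.2 fun t => (hderiv u hu hue t).continuousAt,
      fun t => (hP.abs_perronSol_le hγ (fun s => hB s _ (hue s)) t).trans
        ((div_le_iff₀ hγ).2 (by linarith))⟩)
    (fun u v hu hv hue hve D hD t => by
      rw [perronSol_sub (hint u hu hue t) (hint v hv hve t)]
      refine (hP.abs_perronSol_le hγ (C := L * D) (fun s => ?_) t).trans_eq (by ring)
      exact (hL s _ _ (hue s) (hve s)).trans (mul_le_mul_of_nonneg_left (hD s) hL₀))
  refine ⟨u, hue, fun t => ?_⟩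
  simpa only [hfix] using hderiv u hu hue t

theorem le_mul_exp_of_le_add_integral {w : ℝ → ℝ} (hw : Continuous w) {a K t₀ : ℝ} (hK : 0 ≤ K)
    (h : ∀ t ≥ t₀, w t ≤ a + K * ∫ s in t₀..t, w s) (t : ℝ) (ht : t₀ ≤ t) :
    w t ≤ a * exp (K * (t - t₀)) := by
  have hV : ∀ x, HasDerivAt (fun y => ∫ s in t₀..y, w s) (w x) x := fun x =>
    (hw.integral_hasStrictDerivAt t₀ x).hasDerivAt
  have hgr := le_gronwallBound_of_liminf_deriv_right_le (δ := 0) (K := K) (ε := a)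
    (fun x _ => (hV x).continuousAt.continuousWithinAt)
    (fun x _ r hr => (hV x).hasDerivWithinAt.liminf_right_slope_le hr) (by simp)
    (fun x hx => by linarith [h x hx.1]) t ⟨ht, le_rfl⟩
  have key : a + K * gronwallBound 0 K a (t - t₀) = a * exp (K * (t - t₀)) := by
    rcases hK.eq_or_lt with rfl | hK
    · simp [gronwallBound_K0]
    · rw [gronwallBound_of_K_ne_0 hK.ne']
      field_simp
      ring
  calc w t ≤ a + K * ∫ s in t₀..t, w s := h t ht
    _ ≤ a + K * gronwallBound 0 K a (t - t₀) := by gcongr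
    _ = a * exp (K * (t - t₀)) := key

theorem le_mul_exp_of_le_mul_exp_add_integral {φ : ℝ → ℝ} (hφ : Continuous φ) {a K γ t₀ : ℝ}
    (hK : 0 ≤ K)
    (h : ∀ t ≥ t₀, φ t ≤ a * exp (-γ * (t - t₀)) + K * ∫ s in t₀..t, exp (-γ * (t - s)) * φ s)
    (t : ℝ) (ht : t₀ ≤ t) : φ t ≤ a * exp (-(γ - K) * (t - t₀)) := by
  have hw := le_mul_exp_of_le_add_integral (w := fun s => exp (γ * (s - t₀)) * φ s) (a := a)
    (by fun_prop) hK (fun t ht => ?_) t ht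
  · calc φ t = exp (-γ * (t - t₀)) * (exp (γ * (t - t₀)) * φ t) := by
          rw [← mul_assoc, ← exp_add]; ring_nf; simp
      _ ≤ exp (-γ * (t - t₀)) * (a * exp (K * (t - t₀))) := by gcongr
      _ = a * exp (-(γ - K) * (t - t₀)) := by rw [mul_left_comm, ← exp_add]; ring_nf
  · have hint : ∫ s in t₀..t, exp (γ * (s - t₀)) * φ s =
        exp (γ * (t - t₀)) * ∫ s in t₀..t, exp (-γ * (t - s)) * φ s := by
      rw [← intervalIntegral.integral_const_mul]
      congr 1 with s
      rw [← mul_assoc, ← exp_add]; ring_nf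
    calc exp (γ * (t - t₀)) * φ t
        ≤ exp (γ * (t - t₀)) * (a * exp (-γ * (t - t₀)) +
          K * ∫ s in t₀..t, exp (-γ * (t - s)) * φ s) := by gcongr; exact h t ht
      _ = a + K * ∫ s in t₀..t, exp (γ * (s - t₀)) * φ s := by
          rw [hint, mul_add, mul_left_comm, ← exp_add]; ring_nf; simp

/-- The solution `exp (P t - P t₀) x₀ + ∫_{t₀}^t exp (P t - P s) f s ds` of `x' = P' x + f`
with `x t₀ = x₀`. -/
noncomputable def duhamelSol (P : ℝ → ℝ) (t₀ x₀ : ℝ) (f : ℝ → ℝ) (t : ℝ) : ℝ :=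
  exp (P t) * (exp (-P t₀) * x₀ + ∫ s in t₀..t, exp (-P s) * f s)

section

variable {P p f : ℝ → ℝ} {t₀ x₀ : ℝ}

theorem duhamelSol_self : duhamelSol P t₀ x₀ f t₀ = x₀ := by
  simp [duhamelSol, ← mul_assoc, ← exp_add]

theorem hasDerivAt_duhamelSol (hP' : ∀ t, HasDerivAt P (p t) t) (hfc : Continuous f) (t : ℝ) :
    HasDerivAt (duhamelSol P t₀ x₀ f) (p t * duhamelSol P t₀ x₀ f t + f t) t := by
  have hPc : Continuous P := continuous_iff_continuousAt.2 fun t => (hP' t).continuousAt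
  have hI := ((by fun_prop : Continuous fun s => exp (-P s) * f s).integral_hasStrictDerivAt
    t₀ t).hasDerivAt.const_add (exp (-P t₀) * x₀)
  refine ((hP' t).exp.mul hI).congr_deriv ?_
  rw [duhamelSol, ← mul_assoc (exp (P t)), ← exp_add, add_neg_cancel, exp_zero, one_mul]
  ring

theorem duhamelSol_sub {g : ℝ → ℝ} (hPc : Continuous P) (hfc : Continuous f) (hgc : Continuous g)
    (t : ℝ) : duhamelSol P t₀ x₀ f t - duhamelSol P t₀ x₀ g t =
      duhamelSol P t₀ 0 (fun s => f s - g s) t := by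
  rw [duhamelSol, duhamelSol, duhamelSol, ← mul_sub, mul_zero, zero_add, add_sub_add_left_eq_sub,
    ← integral_sub (Continuous.intervalIntegrable (by fun_prop) _ _)
    (Continuous.intervalIntegrable (by fun_prop) _ _)]
  simp only [mul_sub]

theorem IsExpContracting.abs_duhamelSol_le {k γ : ℝ} (hP : IsExpContracting P k γ)
    (hPc : Continuous P) (hfc : Continuous f) {t : ℝ} (ht : t₀ ≤ t) :
    |duhamelSol P t₀ x₀ f t| ≤
      k * exp (-γ * (t - t₀)) * |x₀| + k * ∫ s in t₀..t, exp (-γ * (t - s)) * |f s| := by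
  have hkernel : duhamelSol P t₀ x₀ f t =
      exp (P t - P t₀) * x₀ + ∫ s in t₀..t, exp (P t - P s) * f s := by
    rw [duhamelSol, mul_add, ← mul_assoc, ← exp_add, ← intervalIntegral.integral_const_mul]
    simp only [← mul_assoc, ← exp_add, ← sub_eq_add_neg]
  rw [hkernel, ← intervalIntegral.integral_const_mul]
  refine (abs_add_le _ _).trans (add_le_add ?_ ?_)
  · rw [abs_mul, abs_of_pos (exp_pos _)]
    exact mul_le_mul_of_nonneg_right (hP t₀ t ht) (abs_nonneg _)
  · refine (abs_integral_le_integral_abs ht).trans (integral_mono_on ht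
      (Continuous.intervalIntegrable (by fun_prop) _ _)
      (Continuous.intervalIntegrable (by fun_prop) _ _) fun s hs => ?_)
    rw [abs_mul, abs_of_pos (exp_pos _), ← mul_assoc]
    exact mul_le_mul_of_nonneg_right (hP s t hs.2) (abs_nonneg _)

end

theorem integral_exp_neg_mul_sub_mul_abs_le {γ : ℝ} (hγ : 0 < γ) {f : ℝ → ℝ}
    (hfc : Continuous f) {C : ℝ} (hf : ∀ s, |f s| ≤ C) {t₀ t : ℝ} (ht : t₀ ≤ t) :
    ∫ s in t₀..t, exp (-γ * (t - s)) * |f s| ≤ C / γ := by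
  have hC : 0 ≤ C := (abs_nonneg _).trans (hf 0)
  calc ∫ s in t₀..t, exp (-γ * (t - s)) * |f s| ≤ ∫ s in t₀..t, C * exp (-γ * (t - s)) :=
        integral_mono_on ht (Continuous.intervalIntegrable (by fun_prop) _ _)
          (Continuous.intervalIntegrable (by fun_prop) _ _) fun s _ => by
            rw [mul_comm]; exact mul_le_mul_of_nonneg_right (hf s) (exp_pos _).le
    _ ≤ C * (1 / γ) := by
        rw [intervalIntegral.integral_const_mul]; gcongr; exact integral_exp_neg_mul_sub_le hγ _ _
    _ = C / γ := by ring

-- Solutions on `[t₀, ∞)` are sought as fixed points on all of `ℝ`, frozen before `t₀`.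
theorem exists_fixedPoint_duhamelSol {P p : ℝ → ℝ} {k γ : ℝ}
    (hP' : ∀ t, HasDerivAt P (p t) t) (hP : IsExpContracting P k γ) (hγ : 0 < γ)
    {G : ℝ → ℝ → ℝ} (hG : Continuous fun z : ℝ × ℝ => G z.1 z.2) (hG₀ : ∀ s, G s 0 = 0)
    {r ℓ : ℝ} (hℓ₀ : 0 ≤ ℓ)
    (hL : ∀ s y₁ y₂, |y₁| ≤ r → |y₂| ≤ r → |G s y₁ - G s y₂| ≤ ℓ * |y₁ - y₂|)
    (hcontr : 2 * k * ℓ ≤ γ) (t₀ x₀ : ℝ) (hx₀ : 2 * k * |x₀| ≤ r) :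
    ∃ u : ℝ → ℝ, Continuous u ∧ (∀ t, |u t| ≤ r) ∧
      u = fun t => duhamelSol P t₀ x₀ (fun s => G s (u (max s t₀))) (max t t₀) := by
  have hPc : Continuous P := continuous_iff_continuousAt.2 fun t => (hP' t).continuousAt
  have hk : 0 ≤ k := zero_le_one.trans hP.one_le
  have hr : 0 ≤ r := le_trans (by positivity) hx₀
  have hGr : ∀ s y, |y| ≤ r → |G s y| ≤ ℓ * |y| := fun s y hy => by
    simpa [hG₀] using hL s y 0 hy (by simpa using hr)
  set F : (ℝ → ℝ) → ℝ → ℝ := fun u s => G s (u (max s t₀))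
  have hFc : ∀ u, Continuous u → Continuous (F u) := fun u hu =>
    hG.comp (continuous_id.prodMk (hu.comp (continuous_id.max continuous_const)))
  have hmaps : ∀ u : ℝ → ℝ, Continuous u → (∀ t, |u t| ≤ r) → ∀ t,
      |duhamelSol P t₀ x₀ (F u) (max t t₀)| ≤ r := fun u hu hur t => by
    have ht := le_max_right t t₀
    have h₁ : exp (-γ * (max t t₀ - t₀)) ≤ 1 := exp_le_one_iff.2 (by nlinarith)
    have h₂ := integral_exp_neg_mul_sub_mul_abs_le hγ (hFc u hu) (C := ℓ * r)
      (fun s => (hGr s _ (hur _)).trans (mul_le_mul_of_nonneg_left (hur _) hℓ₀)) ht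
    have h₃ : k * (ℓ * r / γ) ≤ r / 2 := by
      rw [mul_div_assoc', div_le_iff₀ hγ]; nlinarith
    calc _ ≤ _ := hP.abs_duhamelSol_le hPc (hFc u hu) ht
      _ ≤ k * 1 * |x₀| + k * (ℓ * r / γ) := by gcongr
      _ ≤ r := by linarith
  have hlip : ∀ u v : ℝ → ℝ, Continuous u → Continuous v → (∀ t, |u t| ≤ r) →
      (∀ t, |v t| ≤ r) → ∀ D, (∀ t, |u t - v t| ≤ D) → ∀ t,
      |duhamelSol P t₀ x₀ (F u) (max t t₀) - duhamelSol P t₀ x₀ (F v) (max t t₀)| ≤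
        1 / 2 * D := fun u v hu hv hur hvr D hD t => by
    have ht := le_max_right t t₀
    have h₁ := integral_exp_neg_mul_sub_mul_abs_le hγ ((hFc u hu).sub (hFc v hv)) (C := ℓ * D)
      (fun s => (hL s _ _ (hur _) (hvr _)).trans (mul_le_mul_of_nonneg_left (hD _) hℓ₀)) ht
    have h₂ : k * (ℓ * D / γ) ≤ 1 / 2 * D := by
      have hD₀ : 0 ≤ D := (abs_nonneg _).trans (hD 0)
      rw [mul_div_assoc', div_le_iff₀ hγ]; nlinarith
    rw [duhamelSol_sub hPc (hFc u hu) (hFc v hv)]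
    calc _ ≤ _ := hP.abs_duhamelSol_le hPc ((hFc u hu).sub (hFc v hv)) ht
      _ ≤ k * exp (-γ * (max t t₀ - t₀)) * |(0 : ℝ)| + k * (ℓ * D / γ) := by gcongr
      _ ≤ 1 / 2 * D := by simpa using h₂
  obtain ⟨u, hu, hur, hfix⟩ := exists_fixedPoint_of_sup_contraction hr
    (by norm_num : (1 / 2 : ℝ) < 1) (fun u t => duhamelSol P t₀ x₀ (F u) (max t t₀))
    (fun u hu hur => ⟨((continuous_iff_continuousAt.2 fun t =>
      (hasDerivAt_duhamelSol hP' (hFc u hu) t).continuousAt)).comp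
        (continuous_id.max continuous_const), hmaps u hu hur⟩) hlip
  exact ⟨u, hu, hur, hfix.symm⟩

theorem exists_decaying_solution_of_isExpContracting {P p : ℝ → ℝ} {k γ : ℝ}
    (hP' : ∀ t, HasDerivAt P (p t) t) (hP : IsExpContracting P k γ) (hγ : 0 < γ)
    {G : ℝ → ℝ → ℝ} (hG : Continuous fun z : ℝ × ℝ => G z.1 z.2) (hG₀ : ∀ s, G s 0 = 0)
    {r ℓ : ℝ} (hℓ₀ : 0 ≤ ℓ)
    (hL : ∀ s y₁ y₂, |y₁| ≤ r → |y₂| ≤ r → |G s y₁ - G s y₂| ≤ ℓ * |y₁ - y₂|)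
    (hcontr : 2 * k * ℓ ≤ γ) (t₀ x₀ : ℝ) (hx₀ : 2 * k * |x₀| ≤ r) :
    ∃ η : ℝ → ℝ, η t₀ = x₀ ∧ (∀ t ≥ t₀, HasDerivAt η (p t * η t + G t (η t)) t) ∧
      ∀ t ≥ t₀, |η t| ≤ k * |x₀| * exp (-(γ - k * ℓ) * (t - t₀)) := by
  have hPc : Continuous P := continuous_iff_continuousAt.2 fun t => (hP' t).continuousAt
  obtain ⟨u, hu, hur, hfix⟩ :=
    exists_fixedPoint_duhamelSol hP' hP hγ hG hG₀ hℓ₀ hL hcontr t₀ x₀ hx₀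
  set f := fun s => G s (u (max s t₀))
  have hfc : Continuous f := hG.comp (continuous_id.prodMk
    (hu.comp (continuous_id.max continuous_const)))
  have hu_eq : ∀ s ≥ t₀, u (max s t₀) = duhamelSol P t₀ x₀ f s := fun s hs => by
    rw [max_eq_left hs, hfix]; simp only [max_eq_left hs, f]
  refine ⟨duhamelSol P t₀ x₀ f, duhamelSol_self, fun t ht => ?_, fun t ht => ?_⟩
  · simpa only [f, hu_eq t ht] using hasDerivAt_duhamelSol hP' hfc t
  have hηc : Continuous (duhamelSol P t₀ x₀ f) := continuous_iff_continuousAt.2 fun t =>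
    (hasDerivAt_duhamelSol hP' hfc t).continuousAt
  have hk : 0 ≤ k := zero_le_one.trans hP.one_le
  refine le_mul_exp_of_le_mul_exp_add_integral hηc.abs (by positivity)
    (fun t ht => (hP.abs_duhamelSol_le hPc hfc ht).trans ?_) t ht
  have hGη : ∫ s in t₀..t, exp (-γ * (t - s)) * |f s| ≤
      ℓ * ∫ s in t₀..t, exp (-γ * (t - s)) * |duhamelSol P t₀ x₀ f s| := by
    rw [← intervalIntegral.integral_const_mul]
    refine integral_mono_on ht (Continuous.intervalIntegrable (by fun_prop) _ _)
      (Continuous.intervalIntegrable (by fun_prop) _ _) fun s hs => ?_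
    have hGu := hL s _ 0 (hur (max s t₀)) (by simpa using (abs_nonneg _).trans (hur 0))
    rw [hG₀, sub_zero, sub_zero] at hGu
    rw [mul_left_comm, ← hu_eq s hs.1]
    exact mul_le_mul_of_nonneg_left hGu (exp_pos _).le
  calc _ ≤ k * exp (-γ * (t - t₀)) * |x₀| +
        k * (ℓ * ∫ s in t₀..t, exp (-γ * (t - s)) * |duhamelSol P t₀ x₀ f s|) := by gcongr
    _ = _ := by ring

theorem abs_sub_sub_mul_sub_le {f f' : ℝ → ℝ} (hf : ∀ x, HasDerivAt f (f' x) x) {z a r L : ℝ}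
    (hL : ∀ y, |y| ≤ r → |f' (z + y) - a| ≤ L) {y₁ y₂ : ℝ} (h₁ : |y₁| ≤ r) (h₂ : |y₂| ≤ r) :
    |f (z + y₁) - f (z + y₂) - a * (y₁ - y₂)| ≤ L * |y₁ - y₂| := by
  have hderiv : ∀ y ∈ Icc (-r) r,
      HasDerivWithinAt (fun y => f (z + y) - a * y) (f' (z + y) - a) (Icc (-r) r) y :=
    fun y _ => (((hf (z + y)).comp y ((hasDerivAt_id y).const_add z)).sub
      ((hasDerivAt_id y).const_mul a)).hasDerivWithinAt.congr_deriv (by simp)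
  have := (convex_Icc (-r) r).norm_image_sub_le_of_norm_hasDerivWithin_le hderiv
    (fun y hy => hL y (abs_le.2 hy)) (abs_le.1 h₂) (abs_le.1 h₁)
  simp only [Real.norm_eq_abs] at this
  convert this using 2; ring

theorem exists_solution_near_of_exp_integral_le {g gx : ℝ → ℝ → ℝ}
    (hgc : Continuous fun z : ℝ × ℝ => g z.1 z.2) (hg : ∀ t x, HasDerivAt (g t) (gx t x) x)
    {b b' p : ℝ → ℝ} (hb : ∀ t, HasDerivAt b (b' t) t) (hb' : Continuous b')
    (hpc : Continuous p) {k γ : ℝ}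
    (hp : ∀ s t, s ≤ t → exp (∫ r in s..t, p r) ≤ k * exp (-γ * (t - s))) (hγ : 0 < γ)
    {e δ L : ℝ} (he : 0 ≤ e) (hdefect : ∀ t, |g t (b t) - b' t| ≤ δ)
    (hgx : ∀ t y, |y| ≤ e → |gx t (b t + y) - p t| ≤ L)
    (hball : k * (δ + L * e) ≤ γ * e) (hcontr : k * L < γ) :
    ∃ bg : ℝ → ℝ, (∀ t, HasDerivAt bg (g t (bg t)) t) ∧ ∀ t, |bg t - b t| ≤ e := by
  have hbc : Continuous b := continuous_iff_continuousAt.2 fun t => (hb t).continuousAt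
  have hL₀ : 0 ≤ L := (abs_nonneg _).trans (hgx 0 0 (by simpa using he))
  set F : ℝ → ℝ → ℝ := fun s y => g s (b s + y) - b' s - p s * y
  have hLip : ∀ s y₁ y₂, |y₁| ≤ e → |y₂| ≤ e → |F s y₁ - F s y₂| ≤ L * |y₁ - y₂| :=
    fun s y₁ y₂ h₁ h₂ => by
      convert abs_sub_sub_mul_sub_le (hg s) (hgx s) h₁ h₂ using 2
      simp only [F]; ring
  have hB : ∀ s y, |y| ≤ e → |F s y| ≤ δ + L * e := fun s y hy => by
    have h₀ : |F s 0| ≤ δ := by simpa [F] using hdefect s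
    have h₁ : |F s y - F s 0| ≤ L * e := by
      simpa using (hLip s y 0 hy (by simpa using he)).trans
        (mul_le_mul_of_nonneg_left (by simpa using hy) hL₀)
    calc |F s y| ≤ |F s 0| + |F s y - F s 0| := by
          simpa using abs_add_le (F s 0) (F s y - F s 0)
      _ ≤ δ + L * e := add_le_add h₀ h₁
  obtain ⟨u, hue, hu⟩ := exists_bounded_solution_of_isExpContracting
    (fun t => (hpc.integral_hasStrictDerivAt 0 t).hasDerivAt) (isExpContracting_integral hpc hp)
    hγ (F := F) (by fun_prop) he hL₀ hB hLip hball hcontr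
  refine ⟨fun t => b t + u t, fun t => ((hb t).add (hu t)).congr_deriv (by simp only [F]; ring),
    fun t => by simpa using hue t⟩

theorem exists_attracted_solution {g gx : ℝ → ℝ → ℝ}
    (hgc : Continuous fun z : ℝ × ℝ => g z.1 z.2) (hg : ∀ t x, HasDerivAt (g t) (gx t x) x)
    (hgxc : Continuous fun z : ℝ × ℝ => gx z.1 z.2) {bg : ℝ → ℝ}
    (hbg : ∀ t, HasDerivAt bg (g t (bg t)) t) {k γ : ℝ} (hpair : IsHypAttrPair gx bg k γ)
    {r ℓ : ℝ} (hℓ : ∀ t y, |y| ≤ r → |gx t (bg t + y) - gx t (bg t)| ≤ ℓ)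
    (hcontr : 2 * k * ℓ ≤ γ) {t₀ x₀ : ℝ} (hx₀ : 2 * k * |bg t₀ - x₀| ≤ r) :
    ∃ ξ : ℝ → ℝ, ξ t₀ = x₀ ∧ IsSolOn g ξ (Ici t₀) ∧
      ∀ t ≥ t₀, |bg t - ξ t| ≤ k * exp (-(γ - k * ℓ) * (t - t₀)) * |bg t₀ - x₀| := by
  obtain ⟨hk, hγ, hdich⟩ := hpair
  have hbgc : Continuous bg := continuous_iff_continuousAt.2 fun t => (hbg t).continuousAt
  have hqc : Continuous fun t => gx t (bg t) := hgxc.comp (continuous_id.prodMk hbgc)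
  have hr : 0 ≤ r := le_trans (by positivity) hx₀
  have hℓ₀ : 0 ≤ ℓ := by simpa using hℓ 0 0 (by simpa using hr)
  set G : ℝ → ℝ → ℝ := fun s y => g s (bg s + y) - g s (bg s) - gx s (bg s) * y
  have hLip : ∀ s y₁ y₂, |y₁| ≤ r → |y₂| ≤ r → |G s y₁ - G s y₂| ≤ ℓ * |y₁ - y₂| :=
    fun s y₁ y₂ h₁ h₂ => by
      convert abs_sub_sub_mul_sub_le (hg s) (hℓ s) h₁ h₂ using 2
      simp only [G]; ring
  obtain ⟨η, hη₀, hη, hηdecay⟩ := exists_decaying_solution_of_isExpContracting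
    (fun t => (hqc.integral_hasStrictDerivAt 0 t).hasDerivAt) (isExpContracting_integral hqc hdich)
    hγ (G := G) (by fun_prop) (fun s => by simp [G]) hℓ₀ hLip hcontr t₀ (x₀ - bg t₀)
    (by rwa [abs_sub_comm])
  refine ⟨fun t => bg t + η t, by simp [hη₀], fun t ht => ?_, fun t ht => ?_⟩
  · exact ((hbg t).add (hη t ht)).congr_deriv (by simp only [G]; ring)
  · simpa [abs_sub_comm, mul_right_comm] using hηdecay t ht

namespace IsHypAttrPair

variable {hx gx : ℝ → ℝ → ℝ} {b bg : ℝ → ℝ} {k γ : ℝ}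

theorem mono (h : IsHypAttrPair hx b k γ) {γ' : ℝ} (hγ' : 0 < γ') (hγ'γ : γ' ≤ γ) :
    IsHypAttrPair hx b k γ' :=
  ⟨h.1, hγ', fun s t hst => (h.2.2 s t hst).trans (by gcongr; linarith [h.1])⟩

theorem of_le_add (h : IsHypAttrPair hx b k γ) (hp : Continuous fun r => hx r (b r))
    (hq : Continuous fun r => gx r (bg r)) {c : ℝ} (hc : c < γ)
    (hle : ∀ r, gx r (bg r) ≤ hx r (b r) + c) : IsHypAttrPair gx bg k (γ - c) := by
  refine ⟨h.1, by linarith, fun s t hst => ?_⟩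
  have hint : ∫ r in s..t, gx r (bg r) ≤ (∫ r in s..t, hx r (b r)) + c * (t - s) := by
    calc ∫ r in s..t, gx r (bg r) ≤ ∫ r in s..t, (hx r (b r) + c) :=
          integral_mono_on hst (hq.intervalIntegrable _ _)
            ((hp.add continuous_const).intervalIntegrable _ _) fun r _ => hle r
      _ = _ := by
          rw [integral_add (hp.intervalIntegrable _ _) intervalIntegrable_const,
            intervalIntegral.integral_const, smul_eq_mul, mul_comm]
  calc exp (∫ r in s..t, gx r (bg r)) ≤ exp (∫ r in s..t, hx r (b r)) * exp (c * (t - s)) := by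
        rw [← exp_add]; exact exp_le_exp.2 hint
    _ ≤ k * exp (-γ * (t - s)) * exp (c * (t - s)) := by gcongr; exact h.2.2 s t hst
    _ = k * exp (-(γ - c) * (t - s)) := by rw [mul_assoc, ← exp_add]; ring_nf

end IsHypAttrPair

theorem Admissible.exists_modulus {f : ℝ → ℝ → ℝ} (hf : Admissible f) (ρ : ℝ) {θ : ℝ}
    (hθ : 0 < θ) : ∃ d > 0, ∀ t u v, u ∈ Icc (-ρ) ρ → v ∈ Icc (-ρ) ρ → |u - v| < d →
      |f t u - f t v| < θ := by
  obtain ⟨d, hd, hmod⟩ := Metric.uniformContinuousOn_iff.1 (hf.2 _ isCompact_Icc).2 θ hθ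
  refine ⟨d, hd, fun t u v hu hv huv => ?_⟩
  simpa [Prod.dist_eq, Real.dist_eq] using
    hmod (t, u) ⟨mem_univ _, hu⟩ (t, v) ⟨mem_univ _, hv⟩ (by simpa [Prod.dist_eq, Real.dist_eq])

theorem Admissible.exists_abs_sub_le {f g : ℝ → ℝ → ℝ} (hf : Admissible f) (hg : Admissible g)
    {J : Set ℝ} (hJ : IsCompact J) : ∃ C, ∀ t, ∀ x ∈ J, |f t x - g t x| ≤ C := by
  obtain ⟨Cf, hCf⟩ := (hf.2 J hJ).1
  obtain ⟨Cg, hCg⟩ := (hg.2 J hJ).1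
  exact ⟨Cf + Cg, fun t x hx => (abs_sub _ _).trans (add_le_add (hCf t x hx) (hCg t x hx))⟩

theorem abs_lt_of_norm1_lt {f fx : ℝ → ℝ → ℝ} {ρ δ : ℝ}
    (hf : ∃ C, ∀ t, ∀ x ∈ Icc (-ρ) ρ, |f t x| ≤ C) (hfx : ∃ C, ∀ t, ∀ x ∈ Icc (-ρ) ρ, |fx t x| ≤ C)
    (hn : norm1 f fx ρ < δ) {t x : ℝ} (hx : x ∈ Icc (-ρ) ρ) : |f t x| < δ ∧ |fx t x| < δ := by
  obtain ⟨C, hC⟩ := hf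
  obtain ⟨C', hC'⟩ := hfx
  have h₁ := le_ciSup (f := fun p : ℝ × Icc (-ρ) ρ => |f p.1 p.2|)
    ⟨C, by rintro _ ⟨p, rfl⟩; exact hC p.1 p.2 p.2.2⟩ (t, ⟨x, hx⟩)
  have h₂ := le_ciSup (f := fun p : ℝ × Icc (-ρ) ρ => |fx p.1 p.2|)
    ⟨C', by rintro _ ⟨p, rfl⟩; exact hC' p.1 p.2 p.2.2⟩ (t, ⟨x, hx⟩)
  have h₁₀ := Real.iSup_nonneg fun p : ℝ × Icc (-ρ) ρ => abs_nonneg (f p.1 p.2)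
  have h₂₀ := Real.iSup_nonneg fun p : ℝ × Icc (-ρ) ρ => abs_nonneg (fx p.1 p.2)
  rw [norm1] at hn
  constructor <;> dsimp only at h₁ h₂ <;> linarith

def PersistsAttr (h hx : ℝ → ℝ → ℝ) (b : ℝ → ℝ) (ρ k₀ γ ε : ℝ) : Prop :=
  ∃ δ > 0, ∃ ρε > 0, ∀ g gx : ℝ → ℝ → ℝ, C1Admissible g gx →
    norm1 (fun t x => h t x - g t x) (fun t x => hx t x - gx t x) ρ < δ →
    ∃ bg : ℝ → ℝ, IsBoundedSol g bg ∧ IsHypAttrPair gx bg k₀ γ ∧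
      (∃ ε' < ε, ∀ t : ℝ, |b t - bg t| ≤ ε') ∧
      ∀ t₀ x₀ : ℝ, |bg t₀ - x₀| ≤ ρε →
        ∃ ξ : ℝ → ℝ, ξ t₀ = x₀ ∧ IsSolOn g ξ (Ici t₀) ∧
          ∀ t ≥ t₀, |bg t - ξ t| ≤ k₀ * exp (-γ * (t - t₀)) * |bg t₀ - x₀|

theorem exists_hypAttr_near {h hx g gx : ℝ → ℝ → ℝ} (hadm : C1Admissible h hx)
    (hg : C1Admissible g gx) {b : ℝ → ℝ} (hsol : ∀ t, HasDerivAt b (h t (b t)) t)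
    {k γ ρ M : ℝ} (hM : ∀ t, |b t| ≤ M) (hpair : IsHypAttrPair hx b k γ) {e δ L : ℝ}
    (he : 0 ≤ e) (heρ : M + e ≤ ρ) (hdefect : ∀ t x, |x| ≤ ρ → |h t x - g t x| ≤ δ)
    (hgx : ∀ t u v, |u| ≤ ρ → |v| ≤ ρ → |u - v| ≤ e → |gx t u - hx t v| ≤ L)
    (hball : k * (δ + L * e) ≤ γ * e) (hcontr : k * L < γ) :
    ∃ bg : ℝ → ℝ, (∀ t, HasDerivAt bg (g t (bg t)) t) ∧ (∀ t, |bg t - b t| ≤ e) ∧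
      IsHypAttrPair gx bg k (γ - L) := by
  have hbc : Continuous b := continuous_iff_continuousAt.2 fun t => (hsol t).continuousAt
  have hpc : Continuous fun t => hx t (b t) := hadm.2.2.1.comp (continuous_id.prodMk hbc)
  have hρ : ∀ t, |b t| ≤ ρ := fun t => by linarith [hM t]
  obtain ⟨bg, hbg, hbgb⟩ := exists_solution_near_of_exp_integral_le hg.1.1 hg.2.1 hsol
    (hadm.1.1.comp (continuous_id.prodMk hbc)) hpc hpair.2.2 hpair.2.1 he
    (fun t => by rw [abs_sub_comm]; exact hdefect t _ (hρ t))
    (fun t y hy => hgx t _ _ (by linarith [abs_add_le (b t) y, hM t]) (hρ t)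
      (by simpa using hy)) hball hcontr
  have hbgc : Continuous bg := continuous_iff_continuousAt.2 fun t => (hbg t).continuousAt
  have hqc : Continuous fun t => gx t (bg t) := hg.2.2.1.comp (continuous_id.prodMk hbgc)
  have hL : 0 ≤ L := (abs_nonneg _).trans (hgx 0 (b 0) (b 0) (hρ 0) (hρ 0) (by simpa using he))
  refine ⟨bg, hbg, hbgb, hpair.of_le_add hpc hqc (by nlinarith [hpair.1]) fun t => ?_⟩
  have := hgx t (bg t) (b t) (by linarith [abs_sub_abs_le_abs_sub (bg t) (b t), hbgb t, hM t])
    (hρ t) (hbgb t)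
  linarith [le_abs_self (gx t (bg t) - hx t (b t))]

theorem persistsAttr {h hx : ℝ → ℝ → ℝ} (hadm : C1Admissible h hx) {b : ℝ → ℝ}
    (hsol : ∀ t, HasDerivAt b (h t (b t)) t) {k₀ γ₀ ρ M : ℝ} (hM : ∀ t, |b t| ≤ M)
    (hMρ : M < ρ) (hpair : IsHypAttrPair hx b k₀ γ₀) {γ : ℝ} (hγ : 0 < γ) (hγγ₀ : γ < γ₀)
    {ε : ℝ} (hε : 0 < ε) : PersistsAttr h hx b ρ k₀ γ ε := by
  have hk₀ := hpair.1
  have hγ₀ := hpair.2.1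
  have hM₀ : 0 ≤ M := (abs_nonneg _).trans (hM 0)
  -- `θ` bounds the oscillation of `hx` near `b`; the rate lost below,
  -- `(δ + θ) + k₀ (2δ + θ) ≤ 5 k₀ θ`, stays below `γ₀ - γ = 12 k₀ θ`.
  set θ := (γ₀ - γ) / (12 * k₀)
  have hθ : 0 < θ := div_pos (by linarith) (by linarith)
  have hk₀θ : k₀ * θ = (γ₀ - γ) / 12 := by simp only [θ]; field_simp
  have hθk₀θ : θ ≤ k₀ * θ := le_mul_of_one_le_left hθ.le hk₀
  obtain ⟨d, hd, hmod⟩ := hadm.2.2.exists_modulus ρ hθ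
  set r := min ((ρ - M) / 2) (d / 2)
  set e := min (ε / 2) r
  set δ := min θ (γ₀ * e / (2 * k₀))
  have hr : 0 < r := lt_min (by linarith) (by linarith)
  have he : 0 < e := lt_min (by linarith) hr
  have her : e ≤ r := min_le_right _ _
  have hrρ : M + 2 * r ≤ ρ := by linarith [min_le_left ((ρ - M) / 2) (d / 2)]
  have hrd : 2 * r ≤ d := by linarith [min_le_right ((ρ - M) / 2) (d / 2)]
  have hδθ : δ ≤ θ := min_le_left _ _
  have hk₀δθ : k₀ * δ ≤ k₀ * θ := mul_le_mul_of_nonneg_left hδθ (by linarith)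
  have hk₀δ : k₀ * δ ≤ γ₀ * e / 2 := by
    refine (mul_le_mul_of_nonneg_left (min_le_right θ _) (by linarith)).trans_eq ?_
    field_simp
  refine ⟨δ, lt_min hθ (by positivity), r / (2 * k₀), by positivity, fun g gx hg hn => ?_⟩
  have hgap : ∀ t x, |x| ≤ ρ → |h t x - g t x| < δ ∧ |hx t x - gx t x| < δ := fun t x hx =>
    abs_lt_of_norm1_lt (hadm.1.exists_abs_sub_le hg.1 isCompact_Icc)
      (hadm.2.2.exists_abs_sub_le hg.2.2 isCompact_Icc) hn (abs_le.1 hx)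
  have hgx : ∀ t u v, |u| ≤ ρ → |v| ≤ ρ → |u - v| ≤ r → |gx t u - hx t v| ≤ δ + θ :=
    fun t u v hu hv huv => by
      have h₁ := (hgap t u hu).2
      have h₂ := hmod t u v (abs_le.1 hu) (abs_le.1 hv) (by linarith)
      rw [abs_sub_comm] at h₁
      linarith [abs_sub_le (gx t u) (hx t u) (hx t v)]
  obtain ⟨bg, hbg, hbgb, hpair'⟩ := exists_hypAttr_near hadm hg hsol hM hpair he.le
    (by linarith) (fun t x hx => (hgap t x hx).1.le)
    (fun t u v hu hv huv => hgx t u v hu hv (huv.trans her)) (by nlinarith) (by linarith)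
  have hbg_abs : ∀ t, |bg t| ≤ M + e := fun t => by
    linarith [abs_sub_abs_le_abs_sub (bg t) (b t), hM t, hbgb t]
  refine ⟨bg, ⟨hbg, M + e, hbg_abs⟩, hpair'.mono hγ (by linarith),
    ⟨e, by linarith [min_le_left (ε / 2) r], fun t => by rw [abs_sub_comm]; exact hbgb t⟩,
    fun t₀ x₀ hx₀ => ?_⟩
  have hℓ : ∀ t y, |y| ≤ r → |gx t (bg t + y) - gx t (bg t)| ≤ 2 * δ + θ := fun t y hy => by
    have h₁ := hgx t (bg t + y) (bg t) (by linarith [abs_add_le (bg t) y, hbg_abs t])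
      (by linarith [hbg_abs t]) (by simpa using hy)
    have h₂ := (hgap t (bg t) (by linarith [hbg_abs t])).2
    linarith [abs_sub_le (gx t (bg t + y)) (hx t (bg t)) (gx t (bg t))]
  obtain ⟨ξ, hξ₀, hξ, hdecay⟩ := exists_attracted_solution hg.1.1 hg.2.1 hg.2.2.1 hbg hpair' hℓ
    (by linarith) (t₀ := t₀) (x₀ := x₀) (by rw [le_div_iff₀ (by positivity)] at hx₀; linarith)
  refine ⟨ξ, hξ₀, hξ, fun t ht => (hdecay t ht).trans ?_⟩
  gcongr
  nlinarith

def timeRev (f : ℝ → ℝ → ℝ) : ℝ → ℝ → ℝ := fun t x => -f (-t) x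

@[simp]
theorem timeRev_timeRev (f : ℝ → ℝ → ℝ) : timeRev (timeRev f) = f := by
  ext t x; simp [timeRev]

theorem timeRev_sub (f g : ℝ → ℝ → ℝ) :
    (fun t x => timeRev f t x - timeRev g t x) = timeRev fun t x => f t x - g t x := by
  ext t x; simp only [timeRev]; ring

theorem Admissible.rev {f : ℝ → ℝ → ℝ} (hf : Admissible f) : Admissible (timeRev f) := by
  have hflip : UniformContinuous fun p : ℝ × ℝ => (-p.1, p.2) :=
    uniformContinuous_fst.neg.prodMk uniformContinuous_snd
  refine ⟨(hf.1.comp (continuous_fst.neg.prodMk continuous_snd)).neg, fun J hJ => ?_⟩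
  obtain ⟨⟨C, hC⟩, hu⟩ := hf.2 J hJ
  exact ⟨⟨C, fun t x hx => by simpa [timeRev] using hC (-t) x hx⟩,
    _root_.uniformContinuous_neg.comp_uniformContinuousOn
      (hu.comp hflip.uniformContinuousOn fun p hp => ⟨mem_univ _, hp.2⟩)⟩

theorem C1Admissible.rev {f fx : ℝ → ℝ → ℝ} (hf : C1Admissible f fx) :
    C1Admissible (timeRev f) (timeRev fx) :=
  ⟨hf.1.rev, fun t x => (hf.2.1 (-t) x).neg, hf.2.2.rev⟩

theorem HasDerivAt.rev {ξ : ℝ → ℝ} {g : ℝ → ℝ → ℝ} {t : ℝ}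
    (h : HasDerivAt ξ (g (-t) (ξ (-t))) (-t)) :
    HasDerivAt (fun s => ξ (-s)) (timeRev g t (ξ (-t))) t :=
  (h.comp t (hasDerivAt_neg t)).congr_deriv (by simp [timeRev])

theorem integral_timeRev (hx : ℝ → ℝ → ℝ) (b : ℝ → ℝ) (s t : ℝ) :
    ∫ r in s..t, timeRev hx r (b (-r)) = ∫ r in -s..-t, hx r (b r) := by
  simp only [timeRev, intervalIntegral.integral_neg,
    intervalIntegral.integral_comp_neg fun r => hx r (b r)]
  rw [intervalIntegral.integral_symm, neg_neg]

theorem isHypRepPair_iff_timeRev {hx : ℝ → ℝ → ℝ} {b : ℝ → ℝ} {k γ : ℝ} :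
    IsHypRepPair hx b k γ ↔ IsHypAttrPair (timeRev hx) (fun t => b (-t)) k γ := by
  refine and_congr_right' (and_congr_right' ⟨fun h s t hst => ?_, fun h s t hts => ?_⟩)
  · rw [integral_timeRev]
    exact (h (-s) (-t) (by linarith)).trans_eq (by ring_nf)
  · have := h (-s) (-t) (by linarith)
    simp only [integral_timeRev, neg_neg] at this
    exact this.trans_eq (by ring_nf)

theorem norm1_timeRev (f fx : ℝ → ℝ → ℝ) (ρ : ℝ) :
    norm1 (timeRev f) (timeRev fx) ρ = norm1 f fx ρ := by
  let e : ℝ × Icc (-ρ) ρ ≃ ℝ × Icc (-ρ) ρ := (Equiv.neg ℝ).prodCongr (Equiv.refl _)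
  simp only [norm1, timeRev, abs_neg]
  congr 1
  · exact e.iSup_comp (g := fun p => |f p.1 p.2|)
  · exact e.iSup_comp (g := fun p => |fx p.1 p.2|)

def PersistsRep (h hx : ℝ → ℝ → ℝ) (b : ℝ → ℝ) (ρ k₀ γ ε : ℝ) : Prop :=
  ∃ δ > 0, ∃ ρε > 0, ∀ g gx : ℝ → ℝ → ℝ, C1Admissible g gx →
    norm1 (fun t x => h t x - g t x) (fun t x => hx t x - gx t x) ρ < δ →
    ∃ bg : ℝ → ℝ, IsBoundedSol g bg ∧ IsHypRepPair gx bg k₀ γ ∧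
      (∃ ε' < ε, ∀ t : ℝ, |b t - bg t| ≤ ε') ∧
      ∀ t₀ x₀ : ℝ, |bg t₀ - x₀| ≤ ρε →
        ∃ ξ : ℝ → ℝ, ξ t₀ = x₀ ∧ IsSolOn g ξ (Iic t₀) ∧
          ∀ t ≤ t₀, |bg t - ξ t| ≤ k₀ * exp (γ * (t - t₀)) * |bg t₀ - x₀|

theorem PersistsAttr.rev {h hx : ℝ → ℝ → ℝ} {b : ℝ → ℝ} {ρ k₀ γ ε : ℝ}
    (H : PersistsAttr (timeRev h) (timeRev hx) (fun t => b (-t)) ρ k₀ γ ε) :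
    PersistsRep h hx b ρ k₀ γ ε := by
  obtain ⟨δ, hδ, ρε, hρε, H⟩ := H
  refine ⟨δ, hδ, ρε, hρε, fun g gx hg hn => ?_⟩
  obtain ⟨bg, ⟨hbg, C, hC⟩, hpair, ⟨ε', hε', hclose⟩, hattr⟩ :=
    H (timeRev g) (timeRev gx) hg.rev (by rwa [timeRev_sub, timeRev_sub, norm1_timeRev])
  refine ⟨fun t => bg (-t),
    ⟨fun t => by simpa using (hbg (-t)).rev (g := timeRev g), C, fun t => hC (-t)⟩,
    isHypRepPair_iff_timeRev.2 (by simpa using hpair),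
    ⟨ε', hε', fun t => by simpa using hclose (-t)⟩, fun t₀ x₀ hx₀ => ?_⟩
  obtain ⟨ξ, hξ₀, hξ, hdecay⟩ := hattr (-t₀) x₀ hx₀
  refine ⟨fun t => ξ (-t), hξ₀,
    fun t ht => by simpa using (hξ (-t) (mem_Ici.2 (neg_le_neg ht))).rev (g := timeRev g),
    fun t ht => ?_⟩
  exact (hdecay (-t) (neg_le_neg ht)).trans_eq (by ring_nf)

/-- Persistence of hyperbolic solutions: if `b` is a hyperbolic attractive (resp. repulsive)
solution of `x' = h(t,x)` with dichotomy constant pair `(k₀,γ₀)` and `ρ > sup_t |b(t)|`, then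
for every `γ ∈ (0,γ₀)` and `ε > 0` there are `δ > 0` and `ρε > 0` such that every
`C¹`-admissible `g` with `‖h-g‖_{1,ρ} < δ` has a hyperbolic attractive (resp. repulsive)
solution `bg` with pair `(k₀,γ)`, `‖b-bg‖_∞ < ε`, and whose domain of exponential attraction
(resp. repulsion) contains a `ρε`-neighbourhood. -/
theorem stmt5 (h hx : ℝ → ℝ → ℝ) (hadm : C1Admissible h hx)
    (b : ℝ → ℝ) (hsol : ∀ t : ℝ, HasDerivAt b (h t (b t)) t)
    (k₀ γ₀ ρ : ℝ) (hbd : ∃ M : ℝ, (∀ t : ℝ, |b t| ≤ M) ∧ M < ρ) :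
    (IsHypAttrPair hx b k₀ γ₀ →
      ∀ γ : ℝ, 0 < γ → γ < γ₀ → ∀ ε > 0, ∃ δ > 0, ∃ ρε > 0,
        ∀ g gx : ℝ → ℝ → ℝ, C1Admissible g gx →
          norm1 (fun t x => h t x - g t x) (fun t x => hx t x - gx t x) ρ < δ →
          ∃ bg : ℝ → ℝ, IsBoundedSol g bg ∧ IsHypAttrPair gx bg k₀ γ ∧
            (∃ ε' < ε, ∀ t : ℝ, |b t - bg t| ≤ ε') ∧
            ∀ t₀ x₀ : ℝ, |bg t₀ - x₀| ≤ ρε →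
              ∃ ξ : ℝ → ℝ, ξ t₀ = x₀ ∧ IsSolOn g ξ (Set.Ici t₀) ∧
                ∀ t ≥ t₀, |bg t - ξ t| ≤ k₀ * Real.exp (-γ * (t - t₀)) * |bg t₀ - x₀|) ∧
    (IsHypRepPair hx b k₀ γ₀ →
      ∀ γ : ℝ, 0 < γ → γ < γ₀ → ∀ ε > 0, ∃ δ > 0, ∃ ρε > 0,
        ∀ g gx : ℝ → ℝ → ℝ, C1Admissible g gx →
          norm1 (fun t x => h t x - g t x) (fun t x => hx t x - gx t x) ρ < δ →
          ∃ bg : ℝ → ℝ, IsBoundedSol g bg ∧ IsHypRepPair gx bg k₀ γ ∧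
            (∃ ε' < ε, ∀ t : ℝ, |b t - bg t| ≤ ε') ∧
            ∀ t₀ x₀ : ℝ, |bg t₀ - x₀| ≤ ρε →
              ∃ ξ : ℝ → ℝ, ξ t₀ = x₀ ∧ IsSolOn g ξ (Set.Iic t₀) ∧
                ∀ t ≤ t₀, |bg t - ξ t| ≤ k₀ * Real.exp (γ * (t - t₀)) * |bg t₀ - x₀|) := by
  obtain ⟨M, hM, hMρ⟩ := hbd
  refine ⟨fun hpair γ hγ hγγ₀ ε hε => persistsAttr hadm hsol hM hMρ hpair hγ hγγ₀ hε,
    fun hpair γ hγ hγγ₀ ε hε => PersistsAttr.rev ?_⟩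
  exact persistsAttr hadm.rev (fun t => (hsol (-t)).rev) (fun t => hM (-t)) hMρ
    (isHypRepPair_iff_timeRev.1 hpair) hγ hγγ₀ hε
end

section
/- Let h be C¹-admissible and let b̃ be a hyperbolic attractive (resp. hyperbolic repulsive) solution of x'=h(t,x). Then for every t₀∈ℝ and every solution x̄ of x'=h(t,x) defined on (−∞,t₀] (resp. on [t₀,∞)) with x̄(t₀)≠b̃(t₀), one has inf_{t≤t₀}|b̃(t)−x̄(t)|>0 (resp. inf_{t≥t₀}|b̃(t)−x̄(t)|>0). -/
open Set Filter Topology MeasureTheory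

/-!
Write `z = b - ξ`. Near `b`, the mean value theorem and the uniform continuity of `h_x` give
`z z' ≤ (h_x(t, b t) + γ) z²`, so as long as `|z|` stays below a fixed `η`,
`|z T| ≤ |z s| exp ∫ₛᵀ (h_x(r, b r) + γ) ≤ k |z s|` by the attractive dichotomy estimate.
If `|z s|` were below `min η |z t₀| / k` for some `s ≤ t₀`, then at the first time `τ ∈ [s, t₀]`
with `|z τ| ≥ min η |z t₀|` this bound would give `|z τ| < min η |z t₀|`.
The repulsive case is the attractive one for the time-reversed equation `x' = -h(-t, x)`.
-/

open Real

theorem sub_mul_sub_le_of_hasDerivAt_le {f f' : ℝ → ℝ} {a x η L : ℝ}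
    (hf : ∀ y ∈ Metric.ball a η, HasDerivAt f (f' y) y) (hL : ∀ y ∈ Metric.ball a η, f' y ≤ L)
    (hx : x ∈ Metric.ball a η) : (f a - f x) * (a - x) ≤ L * (a - x) ^ 2 := by
  have ha : a ∈ Metric.ball a η := Metric.mem_ball_self (Metric.pos_of_mem_ball hx)
  have hslope := (convex_ball a η).image_sub_le_mul_sub_of_deriv_le (f := f) (C := L)
    (fun y hy => (hf y hy).continuousAt.continuousWithinAt)
    (by
      rw [Metric.isOpen_ball.interior_eq]
      exact fun y hy => (hf y hy).differentiableAt.differentiableWithinAt)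
    (by
      rw [Metric.isOpen_ball.interior_eq]
      exact fun y hy => (hf y hy).deriv ▸ hL y hy)
  rcases le_total x a with hxa | hax
  · nlinarith [hslope x hx a ha hxa]
  · nlinarith [hslope a ha x hx hax]

theorem abs_le_abs_mul_exp_integral_of_deriv_mul_le {z z' L : ℝ → ℝ} {s T : ℝ} (hsT : s ≤ T)
    (hz : ContinuousOn z (Icc s T)) (hz' : ∀ t ∈ Ioo s T, HasDerivAt z (z' t) t)
    (hL : Continuous L) (hle : ∀ t ∈ Ioo s T, z' t * z t ≤ L t * z t ^ 2) :
    |z T| ≤ |z s| * exp (∫ t in s..T, L t) := by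
  set I : ℝ → ℝ := fun u => ∫ t in s..u, L t
  have hI : ∀ u, HasDerivAt I (L u) u := fun u => (hL.integral_hasStrictDerivAt s u).hasDerivAt
  have hIc : Continuous I := continuous_iff_continuousAt.2 fun u => (hI u).continuousAt
  set W : ℝ → ℝ := fun u => z u ^ 2 * exp (-2 * I u)
  have hW : ∀ t ∈ Ioo s T, HasDerivAt W
      (2 * (z' t * z t - L t * z t ^ 2) * exp (-2 * I t)) t := by
    intro t ht
    refine (((hz' t ht).fun_pow 2).mul ((hI t).const_mul (-2)).exp).congr_deriv ?_
    push_cast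
    ring
  have hanti : AntitoneOn W (Icc s T) := by
    apply antitoneOn_of_deriv_nonpos (convex_Icc s T)
    · exact (hz.pow 2).mul (continuous_exp.comp (continuous_const.mul hIc)).continuousOn
    · rw [interior_Icc]; exact fun t ht => (hW t ht).differentiableAt.differentiableWithinAt
    · rw [interior_Icc]
      intro t ht
      rw [(hW t ht).deriv]
      have := hle t ht
      have := exp_pos (-2 * I t)
      nlinarith
  have hWT : W T ≤ W s := hanti (left_mem_Icc.2 hsT) (right_mem_Icc.2 hsT) hsT
  simp only [W, I, intervalIntegral.integral_same, mul_zero, exp_zero, mul_one] at hWT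
  apply abs_le_of_sq_le_sq _ (by positivity)
  calc z T ^ 2 = z T ^ 2 * exp (-2 * I T) * exp (I T) ^ 2 := by
        rw [mul_assoc, ← exp_nat_mul, ← exp_add]; norm_num
    _ ≤ z s ^ 2 * exp (I T) ^ 2 := by gcongr
    _ = (|z s| * exp (I T)) ^ 2 := by rw [mul_pow, sq_abs]

theorem exists_pos_le_abs_of_growth_bound {z : ℝ → ℝ} {t₀ η k : ℝ}
    (hz : ContinuousOn z (Iic t₀)) (hη : 0 < η) (hk : 0 < k) (hz₀ : z t₀ ≠ 0)
    (hgrowth : ∀ s T, s ≤ T → T ≤ t₀ → (∀ r ∈ Ioo s T, |z r| < η) → |z T| ≤ k * |z s|) :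
    ∃ d > 0, ∀ t ≤ t₀, d ≤ |z t| := by
  set m := min η |z t₀|
  have hm : 0 < m := lt_min hη (abs_pos.2 hz₀)
  refine ⟨m / k, div_pos hm hk, fun s hs => ?_⟩
  by_contra! hzs
  have hks : k * |z s| < m := by rwa [lt_div_iff₀' hk] at hzs
  -- the first time `τ ∈ [s, t₀]` at which `|z|` reaches `m`
  have hK : IsCompact {r | r ∈ Icc s t₀ ∧ m ≤ |z r|} :=
    isCompact_Icc.of_isClosed_subset
      (isClosed_Icc.isClosed_le continuousOn_const (hz.mono Icc_subset_Iic_self).abs)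
      fun r hr => hr.1
  obtain ⟨τ, ⟨hτ, hmτ⟩, hτmin⟩ := hK.exists_isLeast ⟨t₀, right_mem_Icc.2 hs, min_le_right _ _⟩
  have hbelow : ∀ r ∈ Ioo s τ, |z r| < η := fun r hr =>
    (lt_of_not_ge fun hmr => (hτmin ⟨⟨hr.1.le, hr.2.le.trans hτ.2⟩, hmr⟩).not_gt hr.2).trans_le
      (min_le_left _ _)
  linarith [hgrowth s τ hτ.1 hτ.2 hbelow]

theorem Admissible.exists_pos_forall_dist_lt {g : ℝ → ℝ → ℝ} (hg : Admissible g) {b : ℝ → ℝ}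
    {C : ℝ} (hb : ∀ t, |b t| ≤ C) {ε : ℝ} (hε : 0 < ε) :
    ∃ η > 0, ∀ t, ∀ y ∈ Metric.ball (b t) η, dist (g t y) (g t (b t)) < ε := by
  obtain ⟨δ, hδ, hUC⟩ := Metric.uniformContinuousOn_iff.1
    (hg.2 (Icc (-(C + 1)) (C + 1)) isCompact_Icc).2 ε hε
  refine ⟨min δ 1, lt_min hδ one_pos, fun t y hy => ?_⟩
  rw [Metric.mem_ball, Real.dist_eq, lt_min_iff] at hy
  have hbt := abs_le.1 (hb t)
  have hyb := abs_lt.1 hy.2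
  refine hUC (t, y) ⟨mem_univ _, by constructor <;> linarith⟩ (t, b t)
    ⟨mem_univ _, by constructor <;> linarith⟩ ?_
  simpa [Prod.dist_eq, Real.dist_eq] using hy.1

theorem IsHypAttrPair.exp_integral_add_le {hx : ℝ → ℝ → ℝ} {b : ℝ → ℝ} {k γ : ℝ}
    (hb : IsHypAttrPair hx b k γ) {s T : ℝ} (hsT : s ≤ T)
    (hint : IntervalIntegrable (fun r => hx r (b r)) volume s T) :
    exp (∫ r in s..T, (hx r (b r) + γ)) ≤ k := by
  rw [intervalIntegral.integral_add hint intervalIntegrable_const, intervalIntegral.integral_const,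
    smul_eq_mul, exp_add]
  calc _ ≤ k * exp (-γ * (T - s)) * exp ((T - s) * γ) := by gcongr; exact hb.2.2 s T hsT
    _ = k := by rw [mul_assoc, ← exp_add]; ring_nf; simp

theorem IsHypAttr.exists_pos_le_abs_sub {h hx : ℝ → ℝ → ℝ} {b ξ : ℝ → ℝ} {t₀ : ℝ}
    (hderiv : ∀ t x, HasDerivAt (fun y => h t y) (hx t x) x) (hhx : Admissible hx)
    (hb : IsHypAttr h hx b) (hξ : IsSolOn h ξ (Iic t₀)) (hne : ξ t₀ ≠ b t₀) :
    ∃ d > 0, ∀ t ≤ t₀, d ≤ |b t - ξ t| := by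
  obtain ⟨⟨hbsol, C, hC⟩, k, γ, hpair⟩ := hb
  obtain ⟨η, hη, hnear⟩ := hhx.exists_pos_forall_dist_lt hC hpair.2.1
  have hbc : Continuous b := continuous_iff_continuousAt.2 fun t => (hbsol t).continuousAt
  have hL : Continuous fun r => hx r (b r) := hhx.1.comp (continuous_id.prodMk hbc)
  have hz : ∀ t ∈ Iic t₀, HasDerivAt (fun t => b t - ξ t) (h t (b t) - h t (ξ t)) t :=
    fun t ht => (hbsol t).sub (hξ t ht)
  refine exists_pos_le_abs_of_growth_bound (η := η) (k := k)
    (fun t ht => (hz t ht).continuousAt.continuousWithinAt) hη (by linarith [hpair.1])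
    (sub_ne_zero.2 hne.symm) fun s T hsT hT hclose => ?_
  have hsub : Icc s T ⊆ Iic t₀ := fun r hr => hr.2.trans hT
  have hone_sided : ∀ r ∈ Ioo s T, (h r (b r) - h r (ξ r)) * (b r - ξ r) ≤
      (hx r (b r) + γ) * (b r - ξ r) ^ 2 := fun r hr =>
    sub_mul_sub_le_of_hasDerivAt_le (fun y _ => hderiv r y)
      (fun y hy => by linarith [(abs_sub_lt_iff.1 (hnear r y hy)).1])
      (by rw [Metric.mem_ball, Real.dist_eq, abs_sub_comm]; exact hclose r hr)
  calc |b T - ξ T| ≤ |b s - ξ s| * exp (∫ r in s..T, (hx r (b r) + γ)) :=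
        abs_le_abs_mul_exp_integral_of_deriv_mul_le hsT
          (fun t ht => (hz t (hsub ht)).continuousAt.continuousWithinAt)
          (fun t ht => hz t (hsub (Ioo_subset_Icc_self ht))) (hL.add continuous_const) hone_sided
    _ ≤ |b s - ξ s| * k := by
        gcongr
        exact hpair.exp_integral_add_le hsT (hL.intervalIntegrable s T)
    _ = k * |b s - ξ s| := mul_comm _ _

def reverseTime (h : ℝ → ℝ → ℝ) (t x : ℝ) : ℝ := -h (-t) x

theorem Admissible.reverseTime {g : ℝ → ℝ → ℝ} (hg : Admissible g) :
    Admissible (reverseTime g) := by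
  have hflip : UniformContinuous fun p : ℝ × ℝ => (-p.1, p.2) :=
    uniformContinuous_fst.neg.prodMk uniformContinuous_snd
  refine ⟨(hg.1.comp hflip.continuous).neg, fun J hJ => ⟨?_, ?_⟩⟩
  · obtain ⟨C, hC⟩ := (hg.2 J hJ).1
    exact ⟨C, fun t x hx => by simpa [_root_.reverseTime] using hC (-t) x hx⟩
  · exact _root_.uniformContinuous_neg.comp_uniformContinuousOn
      ((hg.2 J hJ).2.comp hflip.uniformContinuousOn fun p hp => ⟨mem_univ _, hp.2⟩)

theorem IsSolOn.reverseTime {h : ℝ → ℝ → ℝ} {ξ : ℝ → ℝ} {I : Set ℝ} (hξ : IsSolOn h ξ I) :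
    IsSolOn (reverseTime h) (fun t => ξ (-t)) (-I) := fun t ht => by
  simpa [Function.comp_def, _root_.reverseTime] using (hξ (-t) ht).comp t (hasDerivAt_neg t)

theorem IsHypRep.isHypAttr_reverseTime {h hx : ℝ → ℝ → ℝ} {b : ℝ → ℝ} (hb : IsHypRep h hx b) :
    IsHypAttr (reverseTime h) (reverseTime hx) (fun t => b (-t)) := by
  obtain ⟨⟨hbsol, C, hC⟩, k, γ, hk, hγ, hrep⟩ := hb
  refine ⟨⟨fun t => IsSolOn.reverseTime (I := univ) (fun t _ => hbsol t) t trivial,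
    C, fun t => hC (-t)⟩, k, γ, hk, hγ, fun s t hst => ?_⟩
  have hflip : ∫ r in s..t, reverseTime hx r (b (-r)) = ∫ r in -s..-t, hx r (b r) := by
    rw [intervalIntegral.integral_symm]
    simp only [reverseTime, intervalIntegral.integral_neg, neg_neg]
    exact intervalIntegral.integral_comp_neg fun r => hx r (b r)
  rw [hflip]
  convert hrep (-s) (-t) (neg_le_neg hst) using 3
  ring

/-- Solutions defined on a half-line staying away from a hyperbolic solution:
if `b` is a hyperbolic attractive (resp. repulsive) solution of `x' = h(t,x)`, then any
solution `ξ` defined on `(-∞,t₀]` (resp. `[t₀,∞)`) with `ξ(t₀) ≠ b(t₀)` satisfies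
`inf_{t ≤ t₀} |b(t) - ξ(t)| > 0` (resp. `inf_{t ≥ t₀} |b(t) - ξ(t)| > 0`). -/
theorem stmt6 (h hx : ℝ → ℝ → ℝ) (hadm : C1Admissible h hx) (b : ℝ → ℝ) :
    (IsHypAttr h hx b →
      ∀ t₀ : ℝ, ∀ ξ : ℝ → ℝ, IsSolOn h ξ (Set.Iic t₀) → ξ t₀ ≠ b t₀ →
        ∃ d > 0, ∀ t ≤ t₀, d ≤ |b t - ξ t|) ∧
    (IsHypRep h hx b →
      ∀ t₀ : ℝ, ∀ ξ : ℝ → ℝ, IsSolOn h ξ (Set.Ici t₀) → ξ t₀ ≠ b t₀ →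
        ∃ d > 0, ∀ t ≥ t₀, d ≤ |b t - ξ t|) := by
  obtain ⟨-, hderiv, hhx⟩ := hadm
  refine ⟨fun hb t₀ ξ hξ hne => hb.exists_pos_le_abs_sub hderiv hhx hξ hne,
    fun hb t₀ ξ hξ hne => ?_⟩
  obtain ⟨d, hd, hsep⟩ := hb.isHypAttr_reverseTime.exists_pos_le_abs_sub
    (fun t x => (hderiv (-t) x).neg) hhx.reverseTime (neg_Ici t₀ ▸ hξ.reverseTime)
    (by simpa using hne)
  exact ⟨d, hd, fun t ht => by simpa using hsep (-t) (neg_le_neg ht)⟩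
end

section
/- Let g, g₋ and g₊ be C¹-admissible functions on ℝ×ℝ such that lim_{t→−∞}(g(t,x)−g₋(t,x))=0 and lim_{t→+∞}(g(t,x)−g₊(t,x))=0 uniformly on each compact subset J⊂ℝ. Then lim_{t→−∞}(g_x(t,x)−(g₋)_x(t,x))=0 and lim_{t→+∞}(g_x(t,x)−(g₊)_x(t,x))=0 uniformly on each compact subset J⊂ℝ. -/
open Set Filter Topology MeasureTheory

/-- Key quantitative lemma: if `g - gm` is small on a suitable larger compact set at time `t`,
then `gx - gmx` is small on `J` at time `t`. -/
lemma stmt7_key (g gx gm gmx : ℝ → ℝ → ℝ) (hg : C1Admissible g gx) (hgm : C1Admissible gm gmx)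
    (J : Set ℝ) (hJ : IsCompact J) (ε : ℝ) (hε : 0 < ε) :
    ∃ (J' : Set ℝ) (δ : ℝ), IsCompact J' ∧ 0 < δ ∧
      ∀ t : ℝ, (∀ z ∈ J', |g t z - gm t z| < δ) → ∀ x ∈ J, |gx t x - gmx t x| < ε := by
  obtain ⟨r, hr⟩ := hJ.isBounded.subset_closedBall 0
  have hJsub : J ⊆ Icc (-|r|) |r| := by
    intro y hy
    have h1 : |y| ≤ |r| := le_trans (by simpa [Real.dist_eq] using hr hy) (le_abs_self r)
    exact abs_le.mp h1
  refine ⟨Icc (-|r|) (|r| + 1), ?_⟩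
  have hJ'c : IsCompact (Icc (-|r|) (|r| + 1) : Set ℝ) := isCompact_Icc
  -- uniform continuity of gx and gmx on ℝ × J'
  have hucx := (hg.2.2.2 _ hJ'c).2
  have hucmx := (hgm.2.2.2 _ hJ'c).2
  rw [Metric.uniformContinuousOn_iff] at hucx hucmx
  obtain ⟨η₁, hη₁, H1⟩ := hucx (ε / 4) (by linarith)
  obtain ⟨η₂, hη₂, H2⟩ := hucmx (ε / 4) (by linarith)
  set L : ℝ := min (min η₁ η₂) 1 / 2 with hLdef
  have hLpos : 0 < L := by positivity
  have hL1 : L ≤ 1 / 2 := by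
    have : min (min η₁ η₂) 1 ≤ 1 := min_le_right _ _
    simp only [hLdef]; linarith
  have hLη₁ : L < η₁ := by
    have h1 : min (min η₁ η₂) 1 ≤ η₁ := le_trans (min_le_left _ _) (min_le_left _ _)
    have : 0 < min (min η₁ η₂) 1 := by positivity
    simp only [hLdef]; linarith
  have hLη₂ : L < η₂ := by
    have h1 : min (min η₁ η₂) 1 ≤ η₂ := le_trans (min_le_left _ _) (min_le_right _ _)
    have : 0 < min (min η₁ η₂) 1 := by positivity
    simp only [hLdef]; linarith
  refine ⟨L * ε / 8, hJ'c, by positivity, ?_⟩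
  intro t hsmall x hx
  have hxJ := hJsub hx
  have hxJ' : x ∈ Icc (-|r|) (|r| + 1) := ⟨hxJ.1, by linarith [hxJ.2]⟩
  have hmem : ∀ y ∈ Icc x (x + L), y ∈ Icc (-|r|) (|r| + 1) := by
    intro y hy
    exact ⟨le_trans hxJ.1 hy.1, by linarith [hy.2, hxJ.2, hL1]⟩
  have hxle : x ≤ x + L := by linarith
  -- continuity of gx t ·, gmx t ·
  have cgx : Continuous fun y => gx t y := hg.2.2.1.comp (Continuous.prodMk_right t)
  have cgmx : Continuous fun y => gmx t y := hgm.2.2.1.comp (Continuous.prodMk_right t)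
  have i1 : IntervalIntegrable (fun y => gx t y) volume x (x + L) :=
    cgx.intervalIntegrable _ _
  have i2 : IntervalIntegrable (fun y => gmx t y) volume x (x + L) :=
    cgmx.intervalIntegrable _ _
  -- FTC
  have FTC1 : (∫ y in x..(x + L), gx t y) = g t (x + L) - g t x :=
    intervalIntegral.integral_eq_sub_of_hasDerivAt (fun y _ => hg.2.1 t y) i1
  have FTC2 : (∫ y in x..(x + L), gmx t y) = gm t (x + L) - gm t x :=
    intervalIntegral.integral_eq_sub_of_hasDerivAt (fun y _ => hgm.2.1 t y) i2
  have hint : (∫ y in x..(x + L), (gx t y - gmx t y)) =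
      (g t (x + L) - gm t (x + L)) - (g t x - gm t x) := by
    rw [intervalIntegral.integral_sub i1 i2, FTC1, FTC2]; ring
  -- bound on the integral of the difference of derivatives
  have hb1 : |∫ y in x..(x + L), (gx t y - gmx t y)| < L * ε / 4 := by
    rw [hint]
    have e1 := hsmall (x + L) (hmem _ ⟨hxle, le_refl _⟩)
    have e2 := hsmall x hxJ'
    calc |(g t (x + L) - gm t (x + L)) - (g t x - gm t x)|
        ≤ |g t (x + L) - gm t (x + L)| + |g t x - gm t x| := abs_sub _ _
      _ < L * ε / 8 + L * ε / 8 := by linarith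
      _ = L * ε / 4 := by ring
  -- comparison of the integrand with its value at x
  have hb2 : ‖∫ y in x..(x + L), ((gx t x - gmx t x) - (gx t y - gmx t y))‖ ≤
      ε / 2 * |x + L - x| := by
    apply intervalIntegral.norm_integral_le_of_norm_le_const
    intro y hy
    rw [uIoc_of_le hxle] at hy
    have hyJ' : y ∈ Icc (-|r|) (|r| + 1) := hmem y ⟨le_of_lt hy.1, hy.2⟩
    have hdxy : dist ((t, x) : ℝ × ℝ) (t, y) < min η₁ η₂ := by
      rw [Prod.dist_eq]
      simp only [dist_self, Real.dist_eq]
      have : |x - y| ≤ L := by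
        rw [abs_sub_comm, abs_of_nonneg (by linarith [hy.1.le] : (0:ℝ) ≤ y - x)]
        linarith [hy.2]
      have hL' : L < min η₁ η₂ := lt_min hLη₁ hLη₂
      exact max_lt (by positivity) (lt_of_le_of_lt this hL')
    have d1 := H1 (t, x) (by simp [hxJ']) (t, y) (by simp [hyJ'])
      (lt_of_lt_of_le hdxy (min_le_left _ _))
    have d2 := H2 (t, x) (by simp [hxJ']) (t, y) (by simp [hyJ'])
      (lt_of_lt_of_le hdxy (min_le_right _ _))
    simp only [Real.dist_eq] at d1 d2
    have : ‖(gx t x - gmx t x) - (gx t y - gmx t y)‖ =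
        |(gx t x - gx t y) - (gmx t x - gmx t y)| := by
      rw [Real.norm_eq_abs]; ring_nf
    rw [this]
    calc |(gx t x - gx t y) - (gmx t x - gmx t y)|
        ≤ |gx t x - gx t y| + |gmx t x - gmx t y| := abs_sub _ _
      _ ≤ ε / 4 + ε / 4 := by linarith
      _ = ε / 2 := by ring
  have habs : |x + L - x| = L := by rw [add_sub_cancel_left, abs_of_pos hLpos]
  rw [habs] at hb2
  -- split the constant integral
  have e1 : (∫ y in x..(x + L), ((gx t x - gmx t x) - (gx t y - gmx t y))) =
      L * (gx t x - gmx t x) - ∫ y in x..(x + L), (gx t y - gmx t y) := by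
    rw [intervalIntegral.integral_sub (intervalIntegrable_const) (i1.sub i2),
      intervalIntegral.integral_const]
    simp [smul_eq_mul]
  have key : L * |gx t x - gmx t x| < L * ε / 2 + L * ε / 4 := by
    have : L * (gx t x - gmx t x) =
        (∫ y in x..(x + L), ((gx t x - gmx t x) - (gx t y - gmx t y))) +
        ∫ y in x..(x + L), (gx t y - gmx t y) := by rw [e1]; ring
    calc L * |gx t x - gmx t x| = |L * (gx t x - gmx t x)| := by
          rw [abs_mul, abs_of_pos hLpos]
      _ ≤ ‖∫ y in x..(x + L), ((gx t x - gmx t x) - (gx t y - gmx t y))‖ +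
          |∫ y in x..(x + L), (gx t y - gmx t y)| := by
            rw [this]; exact abs_add_le _ _
      _ < ε / 2 * L + L * ε / 4 := by
            have := hb2; have := hb1; linarith
      _ = L * ε / 2 + L * ε / 4 := by ring
  have : |gx t x - gmx t x| < 3 * ε / 4 := by
    nlinarith [abs_nonneg (gx t x - gmx t x)]
  linarith

/-- If `g`, `g₋`, `g₊` are `C¹`-admissible and `g(t,x) - g_±(t,x) → 0` as `t → ∓∞`
uniformly on compact subsets of `ℝ`, then the same holds for the derivatives with
respect to the state variable. -/
theorem stmt7 (g gx gm gmx gp gpx : ℝ → ℝ → ℝ)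
    (hg : C1Admissible g gx) (hgm : C1Admissible gm gmx) (hgp : C1Admissible gp gpx)
    (hlm : LimAtBot g gm) (hlp : LimAtTop g gp) :
    LimAtBot gx gmx ∧ LimAtTop gx gpx := by
  constructor
  · intro J hJ ε hε
    obtain ⟨J', δ, hJ'c, hδ, hkey⟩ := stmt7_key g gx gm gmx hg hgm J hJ ε hε
    obtain ⟨T, hT⟩ := hlm J' hJ'c δ hδ
    exact ⟨T, fun t ht x hx => hkey t (fun z hz => hT t ht z hz) x hx⟩
  · intro J hJ ε hε
    obtain ⟨J', δ, hJ'c, hδ, hkey⟩ := stmt7_key g gx gp gpx hg hgp J hJ ε hε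
    obtain ⟨T, hT⟩ := hlp J' hJ'c δ hδ
    exact ⟨T, fun t ht x hx => hkey t (fun z hz => hT t ht z hz) x hx⟩
end
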